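/- arXiv:2108.04076 — 3 statements merged into one kernel-verified Lean document; each statement's English description precedes it below -/
import Mathlib

section
/- Let (g,{-,...,-}) be a Lie n-algebra and α ∈ g^0 a Maurer-Cartan element (i.e., {α,...,α} = 0). Then the twisted operations l^α_k(x1,...,xk) := (1/(n−k)!){α,...,α,x1,...,xk} (with n−k copies of α) for k ≤ n, and l^α_k = 0 for k > n, define an L∞-algebra structure on g. Moreover, α+α' is a Maurer-Cartan element of (g,{-,...,-}) if and only if α' is a Maurer-Cartan element of the twisted L∞-algebra. -/
/-- The Koszul sign `ε(σ)` of a permutation `σ` acting on homogeneous elements of degrees `d`: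
the product over inversions of `σ` of `(-1)^{d_a d_b}` for the swapped pair. -/
def koszulSign (K : Type*) [Field K] {p : ℕ} (d : Fin p → ℤ) (σ : Equiv.Perm (Fin p)) : K :=
  ∏ q ∈ Finset.univ.filter (fun q : Fin p × Fin p => q.1 < q.2 ∧ σ q.2 < σ q.1),
    (-1 : K) ^ (d (σ q.1) * d (σ q.2))

/-- `σ` is a `(k, p-k)`-shuffle: strictly monotone on the first `k` positions and on the
remaining positions. -/
def IsShuffle {p : ℕ} (k : ℕ) (σ : Equiv.Perm (Fin p)) : Prop :=
  (∀ a b : Fin p, a < b → (b : ℕ) < k → σ a < σ b) ∧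
  (∀ a b : Fin p, a < b → k ≤ (a : ℕ) → σ a < σ b)

instance {p : ℕ} (k : ℕ) : DecidablePred (fun σ : Equiv.Perm (Fin p) => IsShuffle k σ) :=
  fun σ => by unfold IsShuffle; infer_instance

/-- The `k`-ary operation `l^α_k(x₁,...,xₖ) = (1/(n-k)!) {α,...,α,x₁,...,xₖ}` (with `n-k`
copies of `α`, `n = m+1`) obtained by twisting the Lie `n`-algebra bracket `br` with `α`;
it is `0` for `k > n`. -/
def twistOp (K : Type*) [Field K] {A : Type*} [AddCommGroup A] [Module K A] (m : ℕ)
    (br : (Fin (m + 1) → A) → A) (α : A) (k : ℕ) (x : Fin k → A) : A :=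
  if h : k ≤ m + 1 then
    (((m + 1 - k).factorial : K))⁻¹ •
      br (fun j => if hj : (j : ℕ) < m + 1 - k then α
        else x ⟨(j : ℕ) - (m + 1 - k), by have := j.isLt; omega⟩)
  else 0

section Gadget

variable {q : ℕ}

lemma card_le_fin (S : Finset (Fin q)) : S.card ≤ q := by
  simpa using Finset.card_le_univ S

lemma compl_card (S : Finset (Fin q)) : Sᶜ.card = q - S.card := by
  simp [Finset.card_compl]

lemma card_filter_lt {k : ℕ} (hk : k ≤ q) :
    (Finset.univ.filter (fun j : Fin q => (j : ℕ) < k)).card = k := by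
  rw [show (Finset.univ.filter (fun j : Fin q => (j : ℕ) < k))
      = Finset.map ⟨Fin.castLE hk, Fin.castLE_injective hk⟩ Finset.univ from ?_]
  · simp
  · ext j
    simp only [Finset.mem_filter, Finset.mem_univ, true_and, Finset.mem_map,
      Function.Embedding.coeFn_mk]
    constructor
    · intro hj; exact ⟨⟨j, hj⟩, Fin.ext rfl⟩
    · rintro ⟨a, rfl⟩; exact a.isLt

/-- The function underlying the shuffle associated to a finset `S`. -/
def fsFun (S : Finset (Fin q)) (j : Fin q) : Fin q :=
  if h : (j : ℕ) < S.card then S.orderEmbOfFin rfl ⟨j, h⟩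
  else Sᶜ.orderEmbOfFin (compl_card S) ⟨(j : ℕ) - S.card,
    by have := j.isLt; have := card_le_fin S; omega⟩

lemma fsFun_inj (S : Finset (Fin q)) : Function.Injective (fsFun S) := by
  intro a b hab
  unfold fsFun at hab
  split_ifs at hab with h1 h2 h2
  · have h := (S.orderEmbOfFin rfl).injective hab
    have := congrArg (fun t : Fin S.card => (t : ℕ)) h
    exact Fin.ext this
  · exfalso
    have hm1 : (S.orderEmbOfFin rfl) ⟨a, h1⟩ ∈ S := S.orderEmbOfFin_mem rfl _
    have hm2 := Finset.orderEmbOfFin_mem Sᶜ (compl_card S)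
      (⟨(b : ℕ) - S.card, by have := b.isLt; have := card_le_fin S; omega⟩ : Fin (q - S.card))
    rw [hab] at hm1
    rw [Finset.mem_compl] at hm2
    exact hm2 hm1
  · exfalso
    have hm1 : (S.orderEmbOfFin rfl) ⟨b, h2⟩ ∈ S := S.orderEmbOfFin_mem rfl _
    have hm2 := Finset.orderEmbOfFin_mem Sᶜ (compl_card S)
      (⟨(a : ℕ) - S.card, by have := a.isLt; have := card_le_fin S; omega⟩ : Fin (q - S.card))
    rw [← hab] at hm1
    rw [Finset.mem_compl] at hm2
    exact hm2 hm1
  · have h := (Sᶜ.orderEmbOfFin (compl_card S)).injective hab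
    have h2 := congrArg (fun t : Fin (q - S.card) => (t : ℕ)) h
    simp only at h2
    have ha := a.isLt; have hb := b.isLt
    exact Fin.ext (by omega)

/-- The shuffle permutation associated to a finset `S ⊆ Fin q`: it maps `[0, |S|)`
increasingly onto `S` and the rest increasingly onto `Sᶜ`. -/
noncomputable def fsPerm (S : Finset (Fin q)) : Equiv.Perm (Fin q) :=
  Equiv.ofBijective (fsFun S) (Finite.injective_iff_bijective.1 (fsFun_inj S))

lemma fsPerm_lo (S : Finset (Fin q)) (j : Fin q) (h : (j : ℕ) < S.card) :
    fsPerm S j = S.orderEmbOfFin rfl ⟨j, h⟩ := by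
  show fsFun S j = _
  simp [fsFun, h]

lemma fsPerm_hi (S : Finset (Fin q)) (j : Fin q) (h : ¬ (j : ℕ) < S.card) :
    fsPerm S j = Sᶜ.orderEmbOfFin (compl_card S) ⟨(j : ℕ) - S.card,
      by have := j.isLt; have := card_le_fin S; omega⟩ := by
  show fsFun S j = _
  simp [fsFun, h]

lemma fsPerm_lo_mem (S : Finset (Fin q)) (j : Fin q) (h : (j : ℕ) < S.card) :
    fsPerm S j ∈ S := by
  rw [fsPerm_lo S j h]; exact S.orderEmbOfFin_mem rfl _

lemma fsPerm_hi_mem (S : Finset (Fin q)) (j : Fin q) (h : ¬ (j : ℕ) < S.card) :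
    fsPerm S j ∉ S := by
  rw [fsPerm_hi S j h]
  have := Finset.orderEmbOfFin_mem Sᶜ (compl_card S)
    (⟨(j : ℕ) - S.card, by have := j.isLt; have := card_le_fin S; omega⟩ : Fin (q - S.card))
  rwa [Finset.mem_compl] at this

lemma fsPerm_shuffle (S : Finset (Fin q)) : IsShuffle S.card (fsPerm S) := by
  constructor
  · intro a b hab hb
    have hab' : (a : ℕ) < b := hab
    have ha : (a : ℕ) < S.card := by omega
    rw [fsPerm_lo S a ha, fsPerm_lo S b hb]
    exact (S.orderEmbOfFin rfl).strictMono (show (⟨a, ha⟩ : Fin S.card) < ⟨b, hb⟩ from hab')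
  · intro a b hab ha
    have hab' : (a : ℕ) < b := hab
    have hb : ¬ (b : ℕ) < S.card := by omega
    rw [fsPerm_hi S a (by omega), fsPerm_hi S b hb]
    refine (Sᶜ.orderEmbOfFin (compl_card S)).strictMono ?_
    show (a : ℕ) - S.card < (b : ℕ) - S.card
    omega

/-- every `(k, q-k)`-shuffle arises as `fsPerm` of the image of the initial segment. -/
lemma shuffle_eq_fsPerm {k : ℕ} (hk : k ≤ q) (σ : Equiv.Perm (Fin q)) (hσ : IsShuffle k σ) :
    σ = fsPerm ((Finset.univ.filter (fun j : Fin q => (j : ℕ) < k)).image σ) := by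
  set S := (Finset.univ.filter (fun j : Fin q => (j : ℕ) < k)).image σ with hS
  have hcard : S.card = k := by
    rw [hS, Finset.card_image_of_injective _ σ.injective, card_filter_lt hk]
  -- low part
  have hlow : (fun t : Fin S.card => σ ⟨t, by have := t.isLt; omega⟩)
      = ⇑(S.orderEmbOfFin rfl) := by
    apply Finset.orderEmbOfFin_unique
    · intro t
      refine Finset.mem_image.2 ⟨⟨t, by have := t.isLt; omega⟩, ?_, rfl⟩
      simp only [Finset.mem_filter, Finset.mem_univ, true_and]
      have := t.isLt; omega
    · intro a b hab
      have hab' : (a : ℕ) < b := hab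
      exact hσ.1 _ _ (show ((a:ℕ) : ℕ) < (b:ℕ) from hab')
        (by show (b : ℕ) < k; have := b.isLt; omega)
  have hhigh : (fun t : Fin (q - S.card) => σ ⟨S.card + t, by have := t.isLt; omega⟩)
      = ⇑(Sᶜ.orderEmbOfFin (compl_card S)) := by
    apply Finset.orderEmbOfFin_unique
    · intro t
      rw [Finset.mem_compl]
      intro hmem
      obtain ⟨a, ha, haeq⟩ := Finset.mem_image.1 hmem
      have h3 := σ.injective haeq
      have hval := congrArg (fun u : Fin q => (u : ℕ)) h3
      simp only at hval
      simp only [Finset.mem_filter, Finset.mem_univ, true_and] at ha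
      omega
    · intro a b hab
      have hab' : (a : ℕ) < b := hab
      refine hσ.2 _ _ ?_ (by show k ≤ S.card + (a:ℕ); omega)
      show S.card + (a : ℕ) < S.card + (b : ℕ)
      omega
  refine Equiv.ext fun j => ?_
  rcases lt_or_ge (j : ℕ) S.card with h | h
  · rw [fsPerm_lo S j h, ← congrFun hlow ⟨j, h⟩]
  · rw [fsPerm_hi S j (by omega),
      ← congrFun hhigh ⟨(j : ℕ) - S.card, by have := j.isLt; omega⟩]
    refine congrArg σ (Fin.ext ?_)
    show (j : ℕ) = S.card + ((j : ℕ) - S.card)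
    omega

lemma fsPerm_image (S : Finset (Fin q)) :
    (Finset.univ.filter (fun j : Fin q => (j : ℕ) < S.card)).image (fsPerm S) = S := by
  apply Finset.eq_of_subset_of_card_le
  · intro t ht
    obtain ⟨a, ha, haeq⟩ := Finset.mem_image.1 ht
    simp only [Finset.mem_filter, Finset.mem_univ, true_and] at ha
    exact haeq ▸ fsPerm_lo_mem S a ha
  · rw [Finset.card_image_of_injective _ (fsPerm S).injective,
      card_filter_lt (card_le_fin S)]

/-- reindex a sum over `(k, q-k)`-shuffles as a sum over `k`-element subsets. -/
lemma sum_shuffle_eq_sum_powersetCard {M : Type*} [AddCommMonoid M] {k : ℕ} (hk : k ≤ q)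
    (f : Equiv.Perm (Fin q) → M) :
    ∑ σ ∈ Finset.univ.filter (fun σ : Equiv.Perm (Fin q) => IsShuffle k σ), f σ
      = ∑ S ∈ Finset.powersetCard k (Finset.univ : Finset (Fin q)), f (fsPerm S) := by
  refine Finset.sum_nbij' (fun σ => (Finset.univ.filter (fun j : Fin q => (j : ℕ) < k)).image σ)
    (fun S => fsPerm S) ?_ ?_ ?_ ?_ ?_
  · intro σ hσ
    rw [Finset.mem_powersetCard_univ,
      Finset.card_image_of_injective _ σ.injective, card_filter_lt hk]
  · intro S hS
    rw [Finset.mem_powersetCard_univ] at hS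
    rw [Finset.mem_filter]
    exact ⟨Finset.mem_univ _, hS ▸ fsPerm_shuffle S⟩
  · intro σ hσ
    rw [Finset.mem_filter] at hσ
    exact (shuffle_eq_fsPerm hk σ hσ.2).symm
  · intro S hS
    rw [Finset.mem_powersetCard_univ] at hS
    conv_lhs => rw [← hS]
    exact fsPerm_image S
  · intro σ hσ
    rw [Finset.mem_filter] at hσ
    exact congrArg f (shuffle_eq_fsPerm hk σ hσ.2)

end Gadget
section Main

variable {K : Type*} [Field K] {A : Type*} [AddCommGroup A] [Module K A]

/-- padding a `k`-tuple with `m+1-k` copies of `α` in front. -/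
def padF (m k : ℕ) (hk : k ≤ m + 1) (α : A) (x : Fin k → A) : Fin (m + 1) → A :=
  fun j => if hj : (j : ℕ) < m + 1 - k then α
    else x ⟨(j : ℕ) - (m + 1 - k), by have := j.isLt; omega⟩

/-- padding a degree `k`-tuple with `m+1-k` zeros in front. -/
def padZ (m k : ℕ) (hk : k ≤ m + 1) (d : Fin k → ℤ) : Fin (m + 1) → ℤ :=
  fun j => if hj : (j : ℕ) < m + 1 - k then 0
    else d ⟨(j : ℕ) - (m + 1 - k), by have := j.isLt; omega⟩

/-- `padZ` as a function on `ℕ`. -/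
def padZN (m k : ℕ) (d : Fin k → ℤ) : ℕ → ℤ := fun i =>
  if i < m + 1 - k then 0
  else if h : i - (m + 1 - k) < k then d ⟨i - (m + 1 - k), h⟩ else 0

def resFin (m k : ℕ) (hk0 : 0 < k) (q : Fin (m + 1)) : Fin k :=
  ⟨(q : ℕ) - (m + 1 - k), by have := q.isLt; omega⟩

def injFin (m k : ℕ) (hk : k ≤ m + 1) (c : Fin k) : Fin (m + 1) :=
  ⟨m + 1 - k + (c : ℕ), by have := c.isLt; omega⟩

@[simp] lemma resFin_val (m k : ℕ) (hk0 : 0 < k) (q : Fin (m + 1)) :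
    (resFin m k hk0 q : ℕ) = (q : ℕ) - (m + 1 - k) := rfl

@[simp] lemma injFin_val (m k : ℕ) (hk : k ≤ m + 1) (c : Fin k) :
    (injFin m k hk c : ℕ) = m + 1 - k + (c : ℕ) := rfl

lemma resFin_injFin (m k : ℕ) (hk : k ≤ m + 1) (hk0 : 0 < k) (c : Fin k) :
    resFin m k hk0 (injFin m k hk c) = c := Fin.ext (by simp)

variable {m : ℕ} {br : (Fin (m + 1) → A) → A} {𝒜 : ℤ → Submodule K A}

lemma twistOp_eq (α : A) {k : ℕ} (hk : k ≤ m + 1) (x : Fin k → A) :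
    twistOp K m br α k x = (((m + 1 - k).factorial : K))⁻¹ • br (padF m k hk α x) := by
  rw [twistOp, dif_pos hk]; rfl

lemma twistOp_eq_zero (α : A) {k : ℕ} (hk : ¬ k ≤ m + 1) (x : Fin k → A) :
    twistOp K m br α k x = 0 := dif_neg hk

lemma padZ_hi {k : ℕ} (hk : k ≤ m + 1) (hk0 : 0 < k) (d : Fin k → ℤ) (q : Fin (m + 1))
    (h : ¬ (q : ℕ) < m + 1 - k) : padZ m k hk d q = d (resFin m k hk0 q) := by
  unfold padZ
  rw [dif_neg h]
  rfl

lemma padZ_lo {k : ℕ} (hk : k ≤ m + 1) (d : Fin k → ℤ) (q : Fin (m + 1))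
    (h : (q : ℕ) < m + 1 - k) : padZ m k hk d q = 0 := by
  unfold padZ
  rw [dif_pos h]

lemma padZ_sum {k : ℕ} (hk : k ≤ m + 1) (d : Fin k → ℤ) :
    ∑ j, padZ m k hk d j = ∑ j, d j := by
  have hg : ∀ j : Fin (m + 1), padZ m k hk d j = padZN m k d (j : ℕ) := by
    intro j
    unfold padZ padZN
    by_cases h1 : (j : ℕ) < m + 1 - k
    · rw [dif_pos h1, if_pos h1]
    · rw [dif_neg h1, if_neg h1, dif_pos (by have := j.isLt; omega)]
  calc ∑ j, padZ m k hk d j = ∑ i ∈ Finset.range (m + 1), padZN m k d i := by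
        rw [← Fin.sum_univ_eq_sum_range]
        exact Finset.sum_congr rfl fun j _ => hg j
    _ = ∑ j, d j := by
        rw [Finset.range_eq_Ico,
          ← Finset.sum_Ico_consecutive _ (Nat.zero_le (m + 1 - k)) (by omega : m + 1 - k ≤ m + 1)]
        have h1 : ∑ i ∈ Finset.Ico 0 (m + 1 - k), padZN m k d i = 0 := by
          apply Finset.sum_eq_zero
          intro i hi
          rw [Finset.mem_Ico] at hi
          unfold padZN
          rw [if_pos hi.2]
        rw [h1, zero_add, Finset.sum_Ico_eq_sum_range]
        have h2 : m + 1 - (m + 1 - k) = k := by omega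
        rw [h2, ← Fin.sum_univ_eq_sum_range (fun i => padZN m k d (m + 1 - k + i)) k]
        apply Finset.sum_congr rfl
        intro j _
        have hj := j.isLt
        unfold padZN
        rw [if_neg (by omega), dif_pos (by omega : m + 1 - k + (j:ℕ) - (m + 1 - k) < k)]
        exact congrArg d (Fin.ext (by simp))

lemma padF_mem {α : A} (hα : α ∈ 𝒜 0) {k : ℕ} (hk : k ≤ m + 1) {d : Fin k → ℤ}
    {x : Fin k → A} (hx : ∀ j, x j ∈ 𝒜 (d j)) :
    ∀ j, padF m k hk α x j ∈ 𝒜 (padZ m k hk d j) := by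
  intro j
  unfold padF padZ
  split_ifs with h
  · exact hα
  · exact hx _

lemma br_zero
    (hsmul : ∀ (x : Fin (m + 1) → A) (i : Fin (m + 1)) (c : K) (a : A),
        br (Function.update x i (c • a)) = c • br (Function.update x i a))
    (x : Fin (m + 1) → A) (j : Fin (m + 1)) (hxj : x j = 0) : br x = 0 := by
  have h1 : br x = br (Function.update x j ((0:K) • (0:A))) := by
    rw [smul_zero, ← hxj, Function.update_eq_self]
  rw [h1, hsmul, zero_smul]

lemma koszulSign_eq_one {p : ℕ} (d : Fin p → ℤ) (σ : Equiv.Perm (Fin p))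
    (h : ∀ q : Fin p × Fin p, q.1 < q.2 → σ q.2 < σ q.1 → d (σ q.1) * d (σ q.2) = 0) :
    koszulSign K d σ = 1 := by
  unfold koszulSign
  apply Finset.prod_eq_one
  intro q hq
  rw [Finset.mem_filter] at hq
  rw [h q hq.2.1 hq.2.2, zpow_zero]

lemma sort0
    (hsym : ∀ (d : Fin (m + 1) → ℤ) (x : Fin (m + 1) → A) (σ : Equiv.Perm (Fin (m + 1))),
        (∀ j, x j ∈ 𝒜 (d j)) → br (x ∘ σ) = koszulSign K d σ • br x)
    (x : Fin (m + 1) → A) (hx : ∀ j, x j ∈ 𝒜 0) (σ : Equiv.Perm (Fin (m + 1))) :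
    br (x ∘ σ) = br x := by
  rw [hsym (fun _ => 0) x σ hx, koszulSign_eq_one _ _ (fun q _ _ => by simp), one_smul]

/-- identity on the first `m+1-k` entries, `σ` on the last `k`. -/
def extFun (m k : ℕ) (hk : k ≤ m + 1) (hk0 : 0 < k) (σ : Equiv.Perm (Fin k))
    (j : Fin (m + 1)) : Fin (m + 1) :=
  if (j : ℕ) < m + 1 - k then j else injFin m k hk (σ (resFin m k hk0 j))

lemma extFun_inj (m k : ℕ) (hk : k ≤ m + 1) (hk0 : 0 < k) (σ : Equiv.Perm (Fin k)) :
    Function.Injective (extFun m k hk hk0 σ) := by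
  intro a b hab
  unfold extFun at hab
  split_ifs at hab with h1 h2 h2
  · exact hab
  · have := congrArg Fin.val hab; rw [injFin_val] at this
    have := (σ (resFin m k hk0 b)).isLt
    exact absurd hab (by exact fun _ => by omega)
  · have := congrArg Fin.val hab; rw [injFin_val] at this
    exact absurd hab (by exact fun _ => by omega)
  · have h := congrArg Fin.val hab
    rw [injFin_val, injFin_val] at h
    have h3 : σ (resFin m k hk0 a) = σ (resFin m k hk0 b) := Fin.ext (by omega)
    have h4 := congrArg Fin.val (σ.injective h3)
    rw [resFin_val, resFin_val] at h4
    have := a.isLt; have := b.isLt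
    exact Fin.ext (by omega)

/-- the extension of `σ : Perm (Fin k)` to `Fin (m+1)` fixing the first `m+1-k` points. -/
noncomputable def extPerm (m k : ℕ) (hk : k ≤ m + 1) (hk0 : 0 < k) (σ : Equiv.Perm (Fin k)) :
    Equiv.Perm (Fin (m + 1)) :=
  Equiv.ofBijective (extFun m k hk hk0 σ)
    (Finite.injective_iff_bijective.1 (extFun_inj m k hk hk0 σ))

lemma extPerm_lo {k : ℕ} (hk : k ≤ m + 1) (hk0 : 0 < k) (σ : Equiv.Perm (Fin k))
    (j : Fin (m + 1)) (h : (j : ℕ) < m + 1 - k) : extPerm m k hk hk0 σ j = j := by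
  show extFun m k hk hk0 σ j = j
  rw [extFun, if_pos h]

lemma extPerm_hi {k : ℕ} (hk : k ≤ m + 1) (hk0 : 0 < k) (σ : Equiv.Perm (Fin k))
    (j : Fin (m + 1)) (h : ¬ (j : ℕ) < m + 1 - k) :
    extPerm m k hk hk0 σ j = injFin m k hk (σ (resFin m k hk0 j)) := by
  show extFun m k hk hk0 σ j = _
  rw [extFun, if_neg h]

lemma padF_comp (α : A) {k : ℕ} (hk : k ≤ m + 1) (hk0 : 0 < k) (x : Fin k → A)
    (σ : Equiv.Perm (Fin k)) :
    padF m k hk α (x ∘ σ) = padF m k hk α x ∘ (extPerm m k hk hk0 σ) := by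
  funext j
  by_cases h : (j : ℕ) < m + 1 - k
  · rw [Function.comp_apply, extPerm_lo hk hk0 σ j h]
    unfold padF
    rw [dif_pos h, dif_pos h]
  · rw [Function.comp_apply, extPerm_hi hk hk0 σ j h]
    unfold padF
    rw [dif_neg h, dif_neg (by rw [injFin_val]; omega)]
    rw [Function.comp_apply]
    refine congrArg x (Fin.ext ?_)
    show ((σ (resFin m k hk0 j) : Fin k) : ℕ) = m + 1 - k + (σ (resFin m k hk0 j) : ℕ) - (m + 1 - k)
    omega

lemma koszulSign_ext {k : ℕ} (hk : k ≤ m + 1) (hk0 : 0 < k) (d : Fin k → ℤ)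
    (σ : Equiv.Perm (Fin k)) :
    koszulSign K (padZ m k hk d) (extPerm m k hk hk0 σ) = koszulSign K d σ := by
  have hloval : ∀ j : Fin (m + 1), (j : ℕ) < m + 1 - k →
      ((extPerm m k hk hk0 σ j : Fin (m+1)) : ℕ) = (j : ℕ) := fun j h => by
    rw [extPerm_lo hk hk0 σ j h]
  have hhival : ∀ j : Fin (m + 1), ¬ (j : ℕ) < m + 1 - k →
      ((extPerm m k hk hk0 σ j : Fin (m+1)) : ℕ) = m + 1 - k + (σ (resFin m k hk0 j) : ℕ) :=
    fun j h => by rw [extPerm_hi hk hk0 σ j h, injFin_val]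
  have hboth : ∀ q1 q2 : Fin (m + 1), q1 < q2 → extPerm m k hk hk0 σ q2 < extPerm m k hk hk0 σ q1
      → ¬ (q1 : ℕ) < m + 1 - k ∧ ¬ (q2 : ℕ) < m + 1 - k := by
    intro q1 q2 hlt hinv
    rw [Fin.lt_def] at hlt hinv
    by_cases h2 : (q2 : ℕ) < m + 1 - k
    · have h1 : (q1 : ℕ) < m + 1 - k := by omega
      rw [hloval q1 h1, hloval q2 h2] at hinv
      omega
    by_cases h1 : (q1 : ℕ) < m + 1 - k
    · rw [hloval q1 h1, hhival q2 h2] at hinv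
      omega
    exact ⟨h1, h2⟩
  unfold koszulSign
  refine Finset.prod_nbij'
    (fun q => (resFin m k hk0 q.1, resFin m k hk0 q.2))
    (fun c => (injFin m k hk c.1, injFin m k hk c.2)) ?_ ?_ ?_ ?_ ?_
  · rintro ⟨q1, q2⟩ hq
    simp only [Finset.mem_filter, Finset.mem_univ, true_and] at hq ⊢
    obtain ⟨hlt, hinv⟩ := hq
    obtain ⟨h1, h2⟩ := hboth q1 q2 hlt hinv
    have hlt' : (q1 : ℕ) < (q2 : ℕ) := hlt
    have hinv' : ((extPerm m k hk hk0 σ) q2 : ℕ) < ((extPerm m k hk hk0 σ) q1 : ℕ) := hinv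
    rw [hhival q1 h1, hhival q2 h2] at hinv'
    constructor
    · show (resFin m k hk0 q1 : ℕ) < (resFin m k hk0 q2 : ℕ)
      rw [resFin_val, resFin_val]
      omega
    · show (σ (resFin m k hk0 q2) : ℕ) < (σ (resFin m k hk0 q1) : ℕ)
      omega
  · rintro ⟨c1, c2⟩ hq
    simp only [Finset.mem_filter, Finset.mem_univ, true_and] at hq ⊢
    obtain ⟨hlt, hinv⟩ := hq
    have hlt' : (c1 : ℕ) < (c2 : ℕ) := hlt
    have hinv' : (σ c2 : ℕ) < (σ c1 : ℕ) := hinv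
    constructor
    · show (injFin m k hk c1 : ℕ) < (injFin m k hk c2 : ℕ)
      rw [injFin_val, injFin_val]
      omega
    · show ((extPerm m k hk hk0 σ) (injFin m k hk c2) : ℕ)
          < ((extPerm m k hk hk0 σ) (injFin m k hk c1) : ℕ)
      rw [hhival _ (by rw [injFin_val]; omega), hhival _ (by rw [injFin_val]; omega),
        resFin_injFin m k hk hk0, resFin_injFin m k hk hk0]
      omega
  · rintro ⟨q1, q2⟩ hq
    simp only [Finset.mem_filter, Finset.mem_univ, true_and] at hq
    obtain ⟨hlt, hinv⟩ := hq
    obtain ⟨h1, h2⟩ := hboth q1 q2 hlt hinv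
    have e1 := q1.isLt; have e2 := q2.isLt
    refine Prod.ext (Fin.ext ?_) (Fin.ext ?_) <;>
      · dsimp only
        rw [injFin_val, resFin_val]
        omega
  · rintro ⟨c1, c2⟩ hq
    exact Prod.ext (resFin_injFin m k hk hk0 c1) (resFin_injFin m k hk hk0 c2)
  · rintro ⟨q1, q2⟩ hq
    simp only [Finset.mem_filter, Finset.mem_univ, true_and] at hq
    obtain ⟨hlt, hinv⟩ := hq
    obtain ⟨h1, h2⟩ := hboth q1 q2 hlt hinv
    have hv1 : (extPerm m k hk hk0 σ q1 : ℕ) = m + 1 - k + (σ (resFin m k hk0 q1) : ℕ) :=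
      hhival q1 h1
    have hv2 : (extPerm m k hk hk0 σ q2 : ℕ) = m + 1 - k + (σ (resFin m k hk0 q2) : ℕ) :=
      hhival q2 h2
    have hp1 : padZ m k hk d (extPerm m k hk hk0 σ q1) = d (σ (resFin m k hk0 q1)) := by
      rw [padZ_hi hk hk0 d _ (by omega)]
      refine congrArg d (Fin.ext ?_)
      rw [resFin_val, hv1]
      omega
    have hp2 : padZ m k hk d (extPerm m k hk hk0 σ q2) = d (σ (resFin m k hk0 q2)) := by
      rw [padZ_hi hk hk0 d _ (by omega)]
      refine congrArg d (Fin.ext ?_)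
      rw [resFin_val, hv2]
      omega
    dsimp only
    rw [hp1, hp2]

end Main
section Main2

variable {K : Type*} [Field K] {A : Type*} [AddCommGroup A] [Module K A]
variable {m : ℕ} {br : (Fin (m + 1) → A) → A} {𝒜 : ℤ → Submodule K A}

lemma padF_lo (α : A) {k : ℕ} (hk : k ≤ m + 1) (x : Fin k → A) (q : Fin (m + 1))
    (h : (q : ℕ) < m + 1 - k) : padF m k hk α x q = α := by
  unfold padF; rw [dif_pos h]

lemma padF_hi (α : A) {k : ℕ} (hk : k ≤ m + 1) (hk0 : 0 < k) (x : Fin k → A) (q : Fin (m + 1))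
    (h : ¬ (q : ℕ) < m + 1 - k) : padF m k hk α x q = x (resFin m k hk0 q) := by
  unfold padF; rw [dif_neg h]; rfl

lemma twist_deg (α : A) (hα : α ∈ 𝒜 0)
    (hdeg : ∀ (d : Fin (m + 1) → ℤ) (x : Fin (m + 1) → A),
        (∀ j, x j ∈ 𝒜 (d j)) → br x ∈ 𝒜 ((∑ j, d j) + 1))
    (k : ℕ) (d : Fin k → ℤ) (x : Fin k → A) (hx : ∀ j, x j ∈ 𝒜 (d j)) :
    twistOp K m br α k x ∈ 𝒜 ((∑ j, d j) + 1) := by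
  by_cases hk : k ≤ m + 1
  · rw [twistOp_eq α hk x]
    apply Submodule.smul_mem
    have := hdeg (padZ m k hk d) (padF m k hk α x) (padF_mem hα hk hx)
    rwa [padZ_sum hk d] at this
  · rw [twistOp_eq_zero α hk x]
    exact Submodule.zero_mem _

lemma twist_sym (α : A) (hα : α ∈ 𝒜 0)
    (hsym : ∀ (d : Fin (m + 1) → ℤ) (x : Fin (m + 1) → A) (σ : Equiv.Perm (Fin (m + 1))),
        (∀ j, x j ∈ 𝒜 (d j)) → br (x ∘ σ) = koszulSign K d σ • br x)
    (k : ℕ) (d : Fin k → ℤ) (x : Fin k → A) (σ : Equiv.Perm (Fin k))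
    (hx : ∀ j, x j ∈ 𝒜 (d j)) :
    twistOp K m br α k (x ∘ σ) = koszulSign K d σ • twistOp K m br α k x := by
  by_cases hk : k ≤ m + 1
  · rcases Nat.eq_zero_or_pos k with hk0 | hk0
    · subst hk0
      have hσ : σ = Equiv.refl _ := Subsingleton.elim _ _
      have hx0 : x ∘ σ = x := by funext j; exact absurd j.isLt (by omega)
      rw [hx0, koszulSign_eq_one _ _ (fun q _ _ => absurd q.1.isLt (by omega)), one_smul]
    rw [twistOp_eq α hk (x ∘ σ), twistOp_eq α hk x, padF_comp α hk hk0 x σ,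
      hsym (padZ m k hk d) (padF m k hk α x) (extPerm m k hk hk0 σ) (padF_mem hα hk hx),
      koszulSign_ext hk hk0 d σ, smul_comm]
  · rw [twistOp_eq_zero α hk, twistOp_eq_zero α hk, smul_zero]

/-- the bracket as a multilinear map. -/
noncomputable def brM
    (hadd : ∀ (x : Fin (m + 1) → A) (i : Fin (m + 1)) (a b : A),
        br (Function.update x i (a + b)) =
          br (Function.update x i a) + br (Function.update x i b))
    (hsmul : ∀ (x : Fin (m + 1) → A) (i : Fin (m + 1)) (c : K) (a : A),
        br (Function.update x i (c • a)) = c • br (Function.update x i a)) :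
    MultilinearMap K (fun _ : Fin (m + 1) => A) A where
  toFun := br
  map_update_add' := by
    intro inst x i a b
    have h : inst = instDecidableEqFin (m + 1) := Subsingleton.elim _ _
    subst h
    exact hadd x i a b
  map_update_smul' := by
    intro inst x i c a
    have h : inst = instDecidableEqFin (m + 1) := Subsingleton.elim _ _
    subst h
    exact hsmul x i c a

lemma twistOp_of_zero_entry (α : A)
    (hsmul : ∀ (x : Fin (m + 1) → A) (i : Fin (m + 1)) (c : K) (a : A),
        br (Function.update x i (c • a)) = c • br (Function.update x i a))
    {k : ℕ} (x : Fin k → A) (j : Fin k) (hj : x j = 0) :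
    twistOp K m br α k x = 0 := by
  by_cases hk : k ≤ m + 1
  · have hk0 : 0 < k := j.pos
    rw [twistOp_eq α hk x,
      br_zero hsmul _ (injFin m k hk j) (by
        rw [padF_hi α hk hk0 x _ (by rw [injFin_val]; omega), resFin_injFin m k hk hk0, hj]),
      smul_zero]
  · exact twistOp_eq_zero α hk x

/-- Part 4: the Maurer-Cartan correspondence. -/
lemma mc_correspondence [CharZero K] (α : A) (hα : α ∈ 𝒜 0)
    (hadd : ∀ (x : Fin (m + 1) → A) (i : Fin (m + 1)) (a b : A),
        br (Function.update x i (a + b)) =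
          br (Function.update x i a) + br (Function.update x i b))
    (hsmul : ∀ (x : Fin (m + 1) → A) (i : Fin (m + 1)) (c : K) (a : A),
        br (Function.update x i (c • a)) = c • br (Function.update x i a))
    (hsym : ∀ (d : Fin (m + 1) → ℤ) (x : Fin (m + 1) → A) (σ : Equiv.Perm (Fin (m + 1))),
        (∀ j, x j ∈ 𝒜 (d j)) → br (x ∘ σ) = koszulSign K d σ • br x)
    (hMC : br (fun _ => α) = 0) (α' : A) (hα' : α' ∈ 𝒜 0) :
    br (fun _ => α + α') = 0 ↔
      ∑ k : Fin (m + 1), ((((k : ℕ) + 1).factorial : K))⁻¹ •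
        twistOp K m br α ((k : ℕ) + 1) (fun _ => α') = 0 := by
  classical
  -- expand multilinearly
  have step1 : br (fun _ => α + α')
      = ∑ s : Finset (Fin (m + 1)), br (s.piecewise (fun _ => α') (fun _ => α)) := by
    have h0 : (fun _ : Fin (m + 1) => α + α')
        = (fun _ : Fin (m + 1) => α') + (fun _ : Fin (m + 1) => α) := by
      funext j; exact add_comm α α'
    have h1 := (brM (br := br) hadd hsmul).map_add_univ
      (fun _ : Fin (m + 1) => α') (fun _ : Fin (m + 1) => α)
    have h2 : ∀ y, (brM (br := br) hadd hsmul) y = br y := fun _ => rfl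
    rw [h2] at h1
    simp only [h2] at h1
    rw [h0]
    exact h1
  -- sort each term
  have step2 : ∀ s : Finset (Fin (m + 1)), br (s.piecewise (fun _ => α') (fun _ => α))
      = br (padF m s.card (card_le_fin s) α (fun _ => α')) := by
    intro s
    have hcomp : (s.piecewise (fun _ => α') (fun _ => α)) ∘ (fsPerm sᶜ)
        = padF m s.card (card_le_fin s) α (fun _ => α') := by
      funext j
      rw [Function.comp_apply]
      by_cases h : (j : ℕ) < sᶜ.card
      · have hmem := fsPerm_lo_mem sᶜ j h
        rw [Finset.mem_compl] at hmem
        rw [Finset.piecewise_eq_of_notMem _ _ _ hmem,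
          padF_lo α (card_le_fin s) _ j (by rw [compl_card] at h; omega)]
      · have hmem := fsPerm_hi_mem sᶜ j h
        rw [Finset.notMem_compl] at hmem
        rw [Finset.piecewise_eq_of_mem _ _ _ hmem]
        have hk0 : 0 < s.card := Finset.card_pos.2 ⟨_, hmem⟩
        rw [padF_hi α (card_le_fin s) hk0 _ j (by rw [compl_card] at h; omega)]
    rw [← hcomp]
    refine (sort0 hsym _ ?_ _).symm
    intro j
    by_cases h : j ∈ s
    · rw [Finset.piecewise_eq_of_mem _ _ _ h]; exact hα'
    · rw [Finset.piecewise_eq_of_notMem _ _ _ h]; exact hα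
  -- turn into twistOp
  have step3 : ∀ (k : ℕ) (hk : k ≤ m + 1), br (padF m k hk α (fun _ => α'))
      = ((m + 1 - k).factorial : K) • twistOp K m br α k (fun _ => α') := by
    intro k hk
    rw [twistOp_eq α hk (fun _ => α'), smul_inv_smul₀ (by exact_mod_cast (m+1-k).factorial_ne_zero)]
  -- k = 0 term vanishes
  have step4 : twistOp K m br α 0 (fun _ : Fin 0 => α') = 0 := by
    rw [twistOp_eq α (by omega : 0 ≤ m + 1)]
    have : padF m 0 (by omega) α (fun _ : Fin 0 => α') = fun _ => α := by
      funext j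
      exact padF_lo α _ _ j (by have := j.isLt; omega)
    rw [this, hMC, smul_zero]
  have key : br (fun _ => α + α')
      = ∑ k ∈ Finset.range (m + 1),
          ((m + 1).choose (k + 1) • (((m - k).factorial : K) •
            twistOp K m br α (k + 1) (fun _ => α'))) := by
    rw [step1, ← Finset.powerset_univ, Finset.sum_powerset]
    have hinner : ∀ k : ℕ, k ≤ m + 1 →
        ∑ s ∈ Finset.powersetCard k (Finset.univ : Finset (Fin (m + 1))),
          br (s.piecewise (fun _ => α') (fun _ => α))
        = (m + 1).choose k • (((m + 1 - k).factorial : K) •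
            twistOp K m br α k (fun _ => α')) := by
      intro k hk
      have hterm : ∀ s ∈ Finset.powersetCard k (Finset.univ : Finset (Fin (m + 1))),
          br (s.piecewise (fun _ => α') (fun _ => α))
          = ((m + 1 - k).factorial : K) • twistOp K m br α k (fun _ => α') := by
        intro s hs
        rw [Finset.mem_powersetCard_univ] at hs
        rw [step2 s, step3 s.card (card_le_fin s)]
        rw [show s.card = k from hs]
      rw [Finset.sum_congr rfl hterm, Finset.sum_const, Finset.card_powersetCard,
        Finset.card_univ, Fintype.card_fin]
    rw [Finset.card_univ, Fintype.card_fin]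
    rw [Finset.sum_range_succ']
    have h00 : ∑ s ∈ Finset.powersetCard 0 (Finset.univ : Finset (Fin (m + 1))),
        br (s.piecewise (fun _ => α') (fun _ => α)) = 0 := by
      rw [hinner 0 (by omega), step4, smul_zero, smul_zero]
    rw [h00, add_zero]
    apply Finset.sum_congr rfl
    intro k hk
    rw [Finset.mem_range] at hk
    rw [hinner (k + 1) (by omega), show m + 1 - (k + 1) = m - k by omega]
  -- compare scalars
  have scal : ∀ k : ℕ, k < m + 1 →
      ((m + 1).choose (k + 1) : K) * ((m - k).factorial : K)
        = ((m + 1).factorial : K) * (((k + 1).factorial : K))⁻¹ := by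
    intro k hk
    have hnat : (m + 1).choose (k + 1) * (k + 1).factorial * (m - k).factorial
        = (m + 1).factorial := by
      have := Nat.choose_mul_factorial_mul_factorial (by omega : k + 1 ≤ m + 1)
      rwa [show m + 1 - (k + 1) = m - k by omega] at this
    have hK : ((m + 1).choose (k + 1) : K) * ((k + 1).factorial : K) * ((m - k).factorial : K)
        = ((m + 1).factorial : K) := by exact_mod_cast congrArg (Nat.cast : ℕ → K) hnat
    have hfac : ((k + 1).factorial : K) ≠ 0 := by
      exact_mod_cast (k + 1).factorial_ne_zero
    rw [eq_mul_inv_iff_mul_eq₀ hfac]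
    linear_combination hK
  have key2 : br (fun _ => α + α')
      = ((m + 1).factorial : K) • ∑ k : Fin (m + 1), ((((k : ℕ) + 1).factorial : K))⁻¹ •
          twistOp K m br α ((k : ℕ) + 1) (fun _ => α') := by
    rw [key, Finset.smul_sum, ← Fin.sum_univ_eq_sum_range (fun k =>
      ((m + 1).choose (k + 1) • (((m - k).factorial : K) •
        twistOp K m br α (k + 1) (fun _ => α')))) (m + 1)]
    apply Finset.sum_congr rfl
    intro k _
    rw [smul_smul, ← Nat.cast_smul_eq_nsmul K, smul_smul, scal k k.isLt]
  rw [key2]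
  constructor
  · intro h
    rcases smul_eq_zero.1 h with h1 | h2
    · exact absurd h1 (by exact_mod_cast (m + 1).factorial_ne_zero)
    · exact h2
  · intro h
    rw [h, smul_zero]

end Main2
section Union

variable {N r s : ℕ}

def loFN (hrs : r + s = N) (a : Fin r) : Fin N := ⟨(a : ℕ), by have := a.isLt; omega⟩
def hiFN (hrs : r + s = N) (b : Fin s) : Fin N := ⟨r + (b : ℕ), by have := b.isLt; omega⟩

@[simp] lemma loFN_val (hrs : r + s = N) (a : Fin r) : (loFN hrs a : ℕ) = (a : ℕ) := rfl
@[simp] lemma hiFN_val (hrs : r + s = N) (b : Fin s) : (hiFN hrs b : ℕ) = r + (b : ℕ) := rfl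

lemma loFN_inj (hrs : r + s = N) : Function.Injective (loFN hrs) := fun a b h =>
  Fin.ext (congrArg (fun t : Fin N => (t : ℕ)) h)
lemma hiFN_inj (hrs : r + s = N) : Function.Injective (hiFN hrs) := fun a b h =>
  Fin.ext (by have := congrArg (fun t : Fin N => (t : ℕ)) h
              simp only [hiFN_val] at this; omega)

/-- union of a subset of the low block and a subset of the high block. -/
def unionFS (hrs : r + s = N) (S : Finset (Fin r)) (W : Finset (Fin s)) : Finset (Fin N) :=
  S.map ⟨loFN hrs, loFN_inj hrs⟩ ∪ W.map ⟨hiFN hrs, hiFN_inj hrs⟩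

lemma mem_unionFS_lo (hrs : r + s = N) (S : Finset (Fin r)) (W : Finset (Fin s)) (a : Fin r) :
    loFN hrs a ∈ unionFS hrs S W ↔ a ∈ S := by
  unfold unionFS
  rw [Finset.mem_union]
  constructor
  · rintro (h | h)
    · obtain ⟨a', ha', haeq⟩ := Finset.mem_map.1 h
      rwa [← loFN_inj hrs haeq]
    · obtain ⟨b', hb', hbeq⟩ := Finset.mem_map.1 h
      have := congrArg (fun t : Fin N => (t : ℕ)) hbeq
      simp only [Function.Embedding.coeFn_mk, hiFN_val, loFN_val] at this
      have := a.isLt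
      omega
  · intro h
    exact Or.inl (Finset.mem_map.2 ⟨a, h, rfl⟩)

lemma mem_unionFS_hi (hrs : r + s = N) (S : Finset (Fin r)) (W : Finset (Fin s)) (b : Fin s) :
    hiFN hrs b ∈ unionFS hrs S W ↔ b ∈ W := by
  unfold unionFS
  rw [Finset.mem_union]
  constructor
  · rintro (h | h)
    · obtain ⟨a', ha', haeq⟩ := Finset.mem_map.1 h
      have := congrArg (fun t : Fin N => (t : ℕ)) haeq
      simp only [Function.Embedding.coeFn_mk, hiFN_val, loFN_val] at this
      have := a'.isLt
      omega
    · obtain ⟨b', hb', hbeq⟩ := Finset.mem_map.1 h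
      rwa [← hiFN_inj hrs hbeq]
  · intro h
    exact Or.inr (Finset.mem_map.2 ⟨b, h, rfl⟩)

lemma lo_or_hi (hrs : r + s = N) (t : Fin N) :
    (∃ a : Fin r, t = loFN hrs a) ∨ ∃ b : Fin s, t = hiFN hrs b := by
  by_cases h : (t : ℕ) < r
  · exact Or.inl ⟨⟨t, h⟩, Fin.ext rfl⟩
  · exact Or.inr ⟨⟨(t : ℕ) - r, by have := t.isLt; omega⟩,
      Fin.ext (by simp only [hiFN_val]; have := t.isLt; omega)⟩

lemma compl_unionFS (hrs : r + s = N) (S : Finset (Fin r)) (W : Finset (Fin s)) :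
    (unionFS hrs S W)ᶜ = unionFS hrs Sᶜ Wᶜ := by
  ext t
  rcases lo_or_hi hrs t with ⟨a, rfl⟩ | ⟨b, rfl⟩
  · rw [Finset.mem_compl, mem_unionFS_lo, mem_unionFS_lo, Finset.mem_compl]
  · rw [Finset.mem_compl, mem_unionFS_hi, mem_unionFS_hi, Finset.mem_compl]

lemma card_unionFS (hrs : r + s = N) (S : Finset (Fin r)) (W : Finset (Fin s)) :
    (unionFS hrs S W).card = S.card + W.card := by
  unfold unionFS
  rw [Finset.card_union_of_disjoint, Finset.card_map, Finset.card_map]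
  rw [Finset.disjoint_left]
  rintro t h1 h2
  obtain ⟨a, ha, rfl⟩ := Finset.mem_map.1 h1
  obtain ⟨b, hb, hbeq⟩ := Finset.mem_map.1 h2
  have := congrArg (fun t : Fin N => (t : ℕ)) hbeq
  simp only [Function.Embedding.coeFn_mk, hiFN_val, loFN_val] at this
  have := a.isLt
  omega

/-- the low-block preimage. -/
def SofT (hrs : r + s = N) (T : Finset (Fin N)) : Finset (Fin r) :=
  Finset.univ.filter (fun a : Fin r => loFN hrs a ∈ T)
/-- the high-block preimage. -/
def WofT (hrs : r + s = N) (T : Finset (Fin N)) : Finset (Fin s) :=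
  Finset.univ.filter (fun b : Fin s => hiFN hrs b ∈ T)

lemma unionFS_SofT_WofT (hrs : r + s = N) (T : Finset (Fin N)) :
    unionFS hrs (SofT hrs T) (WofT hrs T) = T := by
  ext t
  rcases lo_or_hi hrs t with ⟨a, rfl⟩ | ⟨b, rfl⟩
  · rw [mem_unionFS_lo]
    unfold SofT
    simp only [Finset.mem_filter, Finset.mem_univ, true_and]
  · rw [mem_unionFS_hi]
    unfold WofT
    simp only [Finset.mem_filter, Finset.mem_univ, true_and]

lemma SofT_unionFS (hrs : r + s = N) (S : Finset (Fin r)) (W : Finset (Fin s)) :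
    SofT hrs (unionFS hrs S W) = S := by
  ext a
  unfold SofT
  simp only [Finset.mem_filter, Finset.mem_univ, true_and]
  exact mem_unionFS_lo hrs S W a

lemma WofT_unionFS (hrs : r + s = N) (S : Finset (Fin r)) (W : Finset (Fin s)) :
    WofT hrs (unionFS hrs S W) = W := by
  ext b
  unfold WofT
  simp only [Finset.mem_filter, Finset.mem_univ, true_and]
  exact mem_unionFS_hi hrs S W b

/-- `orderEmbOfFin` of a `unionFS`, value version. -/
lemma unionFS_oEF (hrs : r + s = N) (S : Finset (Fin r)) (W : Finset (Fin s))
    (j : Fin ((unionFS hrs S W).card)) :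
    ((unionFS hrs S W).orderEmbOfFin rfl j : ℕ)
      = if h : (j : ℕ) < S.card then (S.orderEmbOfFin rfl ⟨j, h⟩ : ℕ)
        else r + (W.orderEmbOfFin rfl ⟨(j : ℕ) - S.card,
          by have := j.isLt; have h2 := card_unionFS hrs S W; omega⟩ : ℕ) := by
  have hf : (fun j : Fin ((unionFS hrs S W).card) =>
      if h : (j : ℕ) < S.card then loFN hrs (S.orderEmbOfFin rfl ⟨j, h⟩)
      else hiFN hrs (W.orderEmbOfFin rfl ⟨(j : ℕ) - S.card,
        by have := j.isLt; have h2 := card_unionFS hrs S W; omega⟩))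
      = ⇑((unionFS hrs S W).orderEmbOfFin rfl) := by
    apply Finset.orderEmbOfFin_unique
    · intro t
      by_cases h : (t : ℕ) < S.card
      · rw [dif_pos h, mem_unionFS_lo]
        exact S.orderEmbOfFin_mem rfl _
      · rw [dif_neg h, mem_unionFS_hi]
        exact W.orderEmbOfFin_mem rfl _
    · intro a b hab
      have hab' : (a : ℕ) < (b : ℕ) := hab
      have key : ∀ (i1 i2 : Fin W.card), (i1 : ℕ) < (i2 : ℕ) →
          ((W.orderEmbOfFin rfl i1 : Fin s) : ℕ) < ((W.orderEmbOfFin rfl i2 : Fin s) : ℕ) :=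
        fun i1 i2 h => (W.orderEmbOfFin rfl).strictMono h
      dsimp only
      by_cases h1 : (a : ℕ) < S.card <;> by_cases h2 : (b : ℕ) < S.card
      · rw [dif_pos h1, dif_pos h2]
        have := (S.orderEmbOfFin rfl).strictMono
          (show (⟨a, h1⟩ : Fin S.card) < ⟨b, h2⟩ from hab')
        show loFN hrs _ < loFN hrs _
        rw [Fin.lt_def]
        simp only [loFN_val]
        exact this
      · rw [dif_pos h1, dif_neg h2, Fin.lt_def]
        simp only [hiFN_val, loFN_val]
        have := ((S.orderEmbOfFin rfl) ⟨a, h1⟩).isLt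
        omega
      · omega
      · rw [dif_neg h1, dif_neg h2, Fin.lt_def]
        simp only [hiFN_val]
        exact Nat.add_lt_add_left
          (key _ _ (show (a : ℕ) - S.card < (b : ℕ) - S.card by omega)) r
  rw [← congrFun hf j]
  by_cases h : (j : ℕ) < S.card
  · rw [dif_pos h, dif_pos h]
    rfl
  · rw [dif_neg h, dif_neg h]
    rfl

/-- `orderEmbOfFin` congruence over set equality, card proofs and index values. -/
lemma oEF_val_eq {γ : Type*} [LinearOrder γ] {U V : Finset γ} (hUV : U = V) {n1 n2 : ℕ}
    (h1 : U.card = n1) (h2 : V.card = n2) (j1 : Fin n1) (j2 : Fin n2)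
    (hj : (j1 : ℕ) = (j2 : ℕ)) : U.orderEmbOfFin h1 j1 = V.orderEmbOfFin h2 j2 := by
  subst hUV; subst h1; subst h2
  exact congrArg _ (Fin.ext hj)

/-- value characterization of the shuffle permutation of a split union, in all four regions. -/
lemma fsPerm_unionFS_lo1 (hrs : r + s = N) (S : Finset (Fin r)) (W : Finset (Fin s))
    (j : Fin N) (hj : (j : ℕ) < S.card) : (fsPerm (unionFS hrs S W) j : ℕ) < r := by
  have hcard := card_unionFS hrs S W
  have h1 : (j : ℕ) < (unionFS hrs S W).card := by omega
  rw [fsPerm_lo _ j h1]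
  rw [unionFS_oEF hrs S W ⟨j, h1⟩]
  rw [dif_pos (show ((⟨(j : ℕ), h1⟩ : Fin _) : ℕ) < S.card from hj)]
  exact (S.orderEmbOfFin rfl _).isLt

lemma fsPerm_unionFS_lo2 (hrs : r + s = N) (S : Finset (Fin r)) (W : Finset (Fin s))
    (j : Fin N) (b : Fin s) (hj1 : S.card ≤ (j : ℕ)) (hj2 : (j : ℕ) < S.card + W.card)
    (hb : (b : ℕ) = (j : ℕ) - S.card) :
    (fsPerm (unionFS hrs S W) j : ℕ) = r + (fsPerm W b : ℕ) := by
  have hcard := card_unionFS hrs S W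
  have h1 : (j : ℕ) < (unionFS hrs S W).card := by omega
  rw [fsPerm_lo _ j h1, unionFS_oEF hrs S W ⟨j, h1⟩,
    dif_neg (show ¬ ((⟨(j : ℕ), h1⟩ : Fin _) : ℕ) < S.card from
      (by omega : ¬ (j : ℕ) < S.card))]
  rw [fsPerm_lo W b (by omega)]
  exact congrArg (fun t : Fin s => r + (t : ℕ))
    (congrArg (⇑(W.orderEmbOfFin rfl)) (Fin.ext (show (j : ℕ) - S.card = (b : ℕ) by omega)))

lemma fsPerm_unionFS_hi1 (hrs : r + s = N) (S : Finset (Fin r)) (W : Finset (Fin s))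
    (j : Fin N) (hj1 : S.card + W.card ≤ (j : ℕ))
    (hj2 : (j : ℕ) - (S.card + W.card) < Sᶜ.card) :
    (fsPerm (unionFS hrs S W) j : ℕ) < r := by
  have hcard := card_unionFS hrs S W
  have hjlt := j.isLt
  have h1 : ¬ (j : ℕ) < (unionFS hrs S W).card := by omega
  have hcard2 := card_unionFS hrs Sᶜ Wᶜ
  have hSc : Sᶜ.card = r - S.card := compl_card S
  have hWc : Wᶜ.card = s - W.card := compl_card W
  have hcle := card_le_fin S
  have hwle := card_le_fin W
  have pfX : (j : ℕ) - (S.card + W.card) < (unionFS hrs Sᶜ Wᶜ).card := by omega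
  rw [fsPerm_hi _ j h1]
  rw [oEF_val_eq (compl_unionFS hrs S W) (compl_card _) rfl _
    (⟨(j : ℕ) - (S.card + W.card), pfX⟩ : Fin (unionFS hrs Sᶜ Wᶜ).card)
    (by omega : (j : ℕ) - (unionFS hrs S W).card = (j : ℕ) - (S.card + W.card))]
  rw [unionFS_oEF hrs Sᶜ Wᶜ]
  rw [dif_pos (show ((⟨(j : ℕ) - (S.card + W.card), pfX⟩ :
      Fin ((unionFS hrs Sᶜ Wᶜ).card)) : ℕ) < Sᶜ.card from hj2)]
  exact (Sᶜ.orderEmbOfFin rfl _).isLt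

lemma fsPerm_unionFS_hi2 (hrs : r + s = N) (S : Finset (Fin r)) (W : Finset (Fin s))
    (j : Fin N) (b : Fin s) (hj1 : S.card + W.card ≤ (j : ℕ))
    (hj2 : Sᶜ.card ≤ (j : ℕ) - (S.card + W.card))
    (hb : (b : ℕ) = W.card + ((j : ℕ) - (S.card + W.card) - Sᶜ.card)) :
    (fsPerm (unionFS hrs S W) j : ℕ) = r + (fsPerm W b : ℕ) := by
  have hcard := card_unionFS hrs S W
  have hjlt := j.isLt
  have hblt := b.isLt
  have h1 : ¬ (j : ℕ) < (unionFS hrs S W).card := by omega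
  have hcard2 := card_unionFS hrs Sᶜ Wᶜ
  have hSc : Sᶜ.card = r - S.card := compl_card S
  have hWc : Wᶜ.card = s - W.card := compl_card W
  have hcle := card_le_fin S
  have hwle := card_le_fin W
  have pfX : (j : ℕ) - (S.card + W.card) < (unionFS hrs Sᶜ Wᶜ).card := by omega
  rw [fsPerm_hi _ j h1]
  rw [oEF_val_eq (compl_unionFS hrs S W) (compl_card _) rfl _
    (⟨(j : ℕ) - (S.card + W.card), pfX⟩ : Fin (unionFS hrs Sᶜ Wᶜ).card)
    (by omega : (j : ℕ) - (unionFS hrs S W).card = (j : ℕ) - (S.card + W.card))]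
  rw [unionFS_oEF hrs Sᶜ Wᶜ]
  rw [dif_neg (show ¬ ((⟨(j : ℕ) - (S.card + W.card), pfX⟩ :
      Fin ((unionFS hrs Sᶜ Wᶜ).card)) : ℕ) < Sᶜ.card from
      (by omega : ¬ (j : ℕ) - (S.card + W.card) < Sᶜ.card))]
  have hbW : ¬ (b : ℕ) < W.card := by omega
  rw [fsPerm_hi W b hbW]
  exact congrArg (fun t : Fin s => r + (t : ℕ))
    (oEF_val_eq rfl rfl (compl_card W) _ _
      (by omega : (j : ℕ) - (S.card + W.card) - Sᶜ.card = (b : ℕ) - W.card))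

end Union

section Move

variable {n : ℕ}

/-- the cycle `0 ↦ c, j ↦ j-1` for `1 ≤ j ≤ c`, identity above `c`. -/
def mvFun (c : Fin n) (j : Fin n) : Fin n :=
  if (j : ℕ) = 0 then c
  else if (j : ℕ) ≤ (c : ℕ) then ⟨(j : ℕ) - 1, by have := j.isLt; omega⟩
  else j

lemma mvFun_inj (c : Fin n) : Function.Injective (mvFun c) := by
  intro a b hab
  unfold mvFun at hab
  split_ifs at hab with h1 h2 h3 h4 h5 h6 h7 h8 <;>
    first
      | (exact Fin.ext (by omega))
      | (exact hab)
      | (exact Fin.ext (by have := congrArg (fun t : Fin n => (t : ℕ)) hab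
                           simp only at this; omega))

noncomputable def mvPerm (c : Fin n) : Equiv.Perm (Fin n) :=
  Equiv.ofBijective (mvFun c) (Finite.injective_iff_bijective.1 (mvFun_inj c))

lemma mvPerm_zero (c : Fin n) (j : Fin n) (h : (j : ℕ) = 0) : mvPerm c j = c := by
  show mvFun c j = c
  rw [mvFun, if_pos h]

lemma mvPerm_mid (c : Fin n) (j : Fin n) (h0 : (j : ℕ) ≠ 0) (h : (j : ℕ) ≤ (c : ℕ)) :
    mvPerm c j = ⟨(j : ℕ) - 1, by have := j.isLt; omega⟩ := by
  show mvFun c j = _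
  rw [mvFun, if_neg h0, if_pos h]

lemma mvPerm_hi (c : Fin n) (j : Fin n) (h0 : (j : ℕ) ≠ 0) (h : ¬ (j : ℕ) ≤ (c : ℕ)) :
    mvPerm c j = j := by
  show mvFun c j = _
  rw [mvFun, if_neg h0, if_neg h]

/-- every inversion of `mvPerm c` is of the form `(0, j)` with image below `c`. -/
lemma mvPerm_inversion (c : Fin n) (q1 q2 : Fin n) (hlt : q1 < q2)
    (hinv : mvPerm c q2 < mvPerm c q1) : (q1 : ℕ) = 0 ∧ (mvPerm c q2 : ℕ) < (c : ℕ) := by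
  have hlt' : (q1 : ℕ) < (q2 : ℕ) := hlt
  have hinv' : (mvPerm c q2 : ℕ) < (mvPerm c q1 : ℕ) := hinv
  have h20 : (q2 : ℕ) ≠ 0 := by omega
  by_cases h1 : (q1 : ℕ) = 0
  · refine ⟨h1, ?_⟩
    rw [mvPerm_zero c q1 h1] at hinv'
    omega
  · exfalso
    by_cases h2 : (q2 : ℕ) ≤ (c : ℕ)
    · rw [mvPerm_mid c q2 h20 h2, mvPerm_mid c q1 h1 (by omega)] at hinv'
      simp only at hinv'
      omega
    · rw [mvPerm_hi c q2 h20 h2] at hinv'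
      by_cases h3 : (q1 : ℕ) ≤ (c : ℕ)
      · rw [mvPerm_mid c q1 h1 h3] at hinv'
        simp only at hinv'
        omega
      · rw [mvPerm_hi c q1 h1 h3] at hinv'
        omega

end Move
section Cons

lemma cons_vzero {n : ℕ} {β : Type*} (x : β) (u : Fin n → β) (j : Fin (n + 1))
    (h : (j : ℕ) = 0) : (Fin.cons x u : Fin (n + 1) → β) j = x := by
  rw [show j = 0 from Fin.ext h]
  exact @Fin.cons_zero n (fun _ => β) x u

lemma cons_vsucc {n : ℕ} {β : Type*} (x : β) (u : Fin n → β) (j : Fin (n + 1)) (t : Fin n)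
    (h : (j : ℕ) = (t : ℕ) + 1) : (Fin.cons x u : Fin (n + 1) → β) j = u t := by
  rw [show j = Fin.succ t from Fin.ext (by rw [h]; rfl)]
  exact @Fin.cons_succ n (fun _ => β) x u t

end Cons

section Main3

variable {K : Type*} [Field K] {A : Type*} [AddCommGroup A] [Module K A]
variable {m : ℕ} {br : (Fin (m + 1) → A) → A} {𝒜 : ℤ → Submodule K A}

lemma br_padF_cons_smul (α : A)
    (hsmul : ∀ (x : Fin (m + 1) → A) (i : Fin (m + 1)) (c : K) (a : A),
        br (Function.update x i (c • a)) = c • br (Function.update x i a))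
    {k : ℕ} (hk : k + 1 ≤ m + 1) (cK : K) (v : A) (u : Fin k → A) :
    br (padF m (k + 1) hk α (Fin.cons (cK • v) u))
      = cK • br (padF m (k + 1) hk α (Fin.cons v u)) := by
  have hk0 : 0 < k + 1 := Nat.succ_pos k
  have hidx : m - k < m + 1 := by omega
  have hupd : ∀ w : A, padF m (k + 1) hk α (Fin.cons w u)
      = Function.update (padF m (k + 1) hk α (Fin.cons v u)) (⟨m - k, hidx⟩ : Fin (m + 1)) w := by
    intro w
    funext j
    by_cases h1 : (j : ℕ) < m + 1 - (k + 1)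
    · rw [padF_lo _ _ _ _ h1, Function.update_of_ne
        (by intro hc; have := congrArg Fin.val hc; simp only at this; omega),
        padF_lo _ _ _ _ h1]
    · by_cases h2 : (j : ℕ) = m - k
      · rw [show j = (⟨m - k, hidx⟩ : Fin (m + 1)) from Fin.ext h2, Function.update_self]
        rw [padF_hi α hk hk0 _ _ (by omega : ¬ m - k < m + 1 - (k + 1))]
        exact cons_vzero _ _ _ (by omega : m - k - (m + 1 - (k + 1)) = 0)
      · rw [Function.update_of_ne (by intro hc; exact h2 (congrArg Fin.val hc))]
        have h3 : ¬ (j : ℕ) < m + 1 - (k + 1) := h1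
        rw [padF_hi α hk hk0 _ j h3, padF_hi α hk hk0 _ j h3]
        have hjv := j.isLt
        rw [cons_vsucc w u _ ⟨(j : ℕ) - (m - k) - 1, by omega⟩
            (by omega : (j : ℕ) - (m + 1 - (k + 1)) = ((j : ℕ) - (m - k) - 1) + 1),
          cons_vsucc v u _ ⟨(j : ℕ) - (m - k) - 1, by omega⟩
            (by omega : (j : ℕ) - (m + 1 - (k + 1)) = ((j : ℕ) - (m - k) - 1) + 1)]
  rw [hupd (cK • v), hsmul, ← hupd v]

end Main3

section Sign

variable {K : Type*} [Field K]

/-- The Koszul sign of the union shuffle equals the Koszul sign of the induced shuffle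
on the `x`-part. -/
lemma koszulSign_union {m p r : ℕ} (hrs : r + (p + 1) = m + 1 + m)
    (d : Fin (p + 1) → ℤ) (e : Fin (m + 1 + m) → ℤ)
    (helo : ∀ t : Fin (m + 1 + m), (t : ℕ) < r → e t = 0)
    (hehi : ∀ (t : Fin (m + 1 + m)) (c : Fin (p + 1)), (t : ℕ) = r + (c : ℕ) → e t = d c)
    (S : Finset (Fin r)) (W : Finset (Fin (p + 1))) (hSW : S.card + W.card = m + 1) :
    koszulSign K e (fsPerm (unionFS hrs S W)) = koszulSign K d (fsPerm W) := by
  set τ := fsPerm (unionFS hrs S W) with hτdef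
  set σ := fsPerm W with hσdef
  have hTcard : (unionFS hrs S W).card = m + 1 := by rw [card_unionFS, hSW]
  have hτshuf : IsShuffle (m + 1) τ := by
    have h := fsPerm_shuffle (unionFS hrs S W)
    rwa [hTcard] at h
  have hσshuf : IsShuffle W.card σ := fsPerm_shuffle W
  have hSc : Sᶜ.card = r - S.card := compl_card S
  have hWc : Wᶜ.card = p + 1 - W.card := compl_card W
  have hSle := card_le_fin S
  have hWle := card_le_fin W
  have hcross : ∀ q1 q2 : Fin (m + 1 + m), q1 < q2 → τ q2 < τ q1 →
      (q1 : ℕ) < m + 1 ∧ m + 1 ≤ (q2 : ℕ) := by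
    intro q1 q2 hlt hinv
    have hinv' : (τ q2 : ℕ) < (τ q1 : ℕ) := hinv
    constructor
    · by_contra hc
      push_neg at hc
      have h := hτshuf.2 q1 q2 hlt (by omega)
      have h' : (τ q1 : ℕ) < (τ q2 : ℕ) := h
      omega
    · by_contra hc
      push_neg at hc
      have h := hτshuf.1 q1 q2 hlt (by omega)
      have h' : (τ q1 : ℕ) < (τ q2 : ℕ) := h
      omega
  have hcrossσ : ∀ c1 c2 : Fin (p + 1), c1 < c2 → σ c2 < σ c1 →
      (c1 : ℕ) < W.card ∧ W.card ≤ (c2 : ℕ) := by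
    intro c1 c2 hlt hinv
    have hinv' : (σ c2 : ℕ) < (σ c1 : ℕ) := hinv
    constructor
    · by_contra hc
      push_neg at hc
      have h := hσshuf.2 c1 c2 hlt (by omega)
      have h' : (σ c1 : ℕ) < (σ c2 : ℕ) := h
      omega
    · by_contra hc
      push_neg at hc
      have h := hσshuf.1 c1 c2 hlt (by omega)
      have h' : (σ c1 : ℕ) < (σ c2 : ℕ) := h
      omega
  have h1 : koszulSign K e τ
      = ∏ q ∈ Finset.univ.filter (fun q : Fin (m + 1 + m) × Fin (m + 1 + m) =>
          q.1 < q.2 ∧ τ q.2 < τ q.1 ∧ r ≤ (τ q.1 : ℕ) ∧ r ≤ (τ q.2 : ℕ)),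
          (-1 : K) ^ (e (τ q.1) * e (τ q.2)) := by
    unfold koszulSign
    refine (Finset.prod_subset ?_ ?_).symm
    · intro q hq
      rw [Finset.mem_filter] at hq ⊢
      exact ⟨hq.1, hq.2.1, hq.2.2.1⟩
    · intro q hq hq2
      rw [Finset.mem_filter] at hq hq2
      push_neg at hq2
      rcases lt_or_ge ((τ q.1 : ℕ)) r with hc | hc
      · rw [helo _ hc, zero_mul, zpow_zero]
      rcases lt_or_ge ((τ q.2 : ℕ)) r with hc2 | hc2
      · rw [helo _ hc2, mul_zero, zpow_zero]
      exact absurd (hq2 hq.1 hq.2.1 hq.2.2 hc) (by omega)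
  rw [h1]
  unfold koszulSign
  refine Finset.prod_nbij'
    (fun q => ((⟨((q.1 : ℕ) - S.card) % (p + 1), Nat.mod_lt _ (Nat.succ_pos p)⟩ : Fin (p + 1)),
               (⟨(W.card + ((q.2 : ℕ) - (m + 1) - Sᶜ.card)) % (p + 1),
                 Nat.mod_lt _ (Nat.succ_pos p)⟩ : Fin (p + 1))))
    (fun c => ((⟨(S.card + (c.1 : ℕ)) % (m + 1 + m), Nat.mod_lt _ (by omega)⟩ : Fin (m + 1 + m)),
               (⟨(m + 1 + Sᶜ.card + ((c.2 : ℕ) - W.card)) % (m + 1 + m),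
                 Nat.mod_lt _ (by omega)⟩ : Fin (m + 1 + m))))
    ?_ ?_ ?_ ?_ ?_
  · rintro ⟨q1, q2⟩ hq
    simp only [Finset.mem_filter, Finset.mem_univ, true_and] at hq ⊢
    obtain ⟨hlt, hinv, hr1, hr2⟩ := hq
    obtain ⟨hq1m, hq2m⟩ := hcross q1 q2 hlt hinv
    have hq1S : S.card ≤ (q1 : ℕ) := by
      by_contra hc
      push_neg at hc
      have h := fsPerm_unionFS_lo1 hrs S W q1 (by omega)
      have h' : (τ q1 : ℕ) < r := h
      omega
    have hq2S : Sᶜ.card ≤ (q2 : ℕ) - (S.card + W.card) := by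
      by_contra hc
      push_neg at hc
      have h := fsPerm_unionFS_hi1 hrs S W q2 (by omega) (by omega)
      have h' : (τ q2 : ℕ) < r := h
      omega
    have hq2lt := q2.isLt
    have hmod1 : ((q1 : ℕ) - S.card) % (p + 1) = (q1 : ℕ) - S.card :=
      Nat.mod_eq_of_lt (by omega)
    have hmod2 : (W.card + ((q2 : ℕ) - (m + 1) - Sᶜ.card)) % (p + 1)
        = W.card + ((q2 : ℕ) - (m + 1) - Sᶜ.card) := Nat.mod_eq_of_lt (by omega)
    have hv1 : (τ q1 : ℕ) = r + (σ (⟨((q1 : ℕ) - S.card) % (p + 1),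
        Nat.mod_lt _ (Nat.succ_pos p)⟩ : Fin (p + 1)) : ℕ) :=
      fsPerm_unionFS_lo2 hrs S W q1 _ hq1S (by omega) hmod1
    have hb2' : (W.card + ((q2 : ℕ) - (m + 1) - Sᶜ.card)) % (p + 1)
        = W.card + ((q2 : ℕ) - (S.card + W.card) - Sᶜ.card) := by
      rw [hSW]; exact hmod2
    have hv2 : (τ q2 : ℕ) = r + (σ (⟨(W.card + ((q2 : ℕ) - (m + 1) - Sᶜ.card)) % (p + 1),
        Nat.mod_lt _ (Nat.succ_pos p)⟩ : Fin (p + 1)) : ℕ) :=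
      fsPerm_unionFS_hi2 hrs S W q2 _ (by omega) (by omega) hb2'
    have hinv' : (τ q2 : ℕ) < (τ q1 : ℕ) := hinv
    refine ⟨?_, ?_⟩
    · show (((q1 : ℕ) - S.card) % (p + 1)) < ((W.card + ((q2 : ℕ) - (m + 1) - Sᶜ.card)) % (p + 1))
      rw [hmod1, hmod2]
      omega
    · show (σ _ : ℕ) < (σ _ : ℕ)
      omega
  · rintro ⟨c1, c2⟩ hc
    simp only [Finset.mem_filter, Finset.mem_univ, true_and] at hc ⊢
    obtain ⟨hlt, hinv⟩ := hc
    obtain ⟨hc1m, hc2m⟩ := hcrossσ c1 c2 hlt hinv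
    have hc2lt := c2.isLt
    have hmod1 : (S.card + (c1 : ℕ)) % (m + 1 + m) = S.card + (c1 : ℕ) :=
      Nat.mod_eq_of_lt (by omega)
    have hmod2 : (m + 1 + Sᶜ.card + ((c2 : ℕ) - W.card)) % (m + 1 + m)
        = m + 1 + Sᶜ.card + ((c2 : ℕ) - W.card) := Nat.mod_eq_of_lt (by omega)
    have ha1 : S.card ≤ (S.card + (c1 : ℕ)) % (m + 1 + m) := by rw [hmod1]; omega
    have ha2 : (S.card + (c1 : ℕ)) % (m + 1 + m) < S.card + W.card := by rw [hmod1]; omega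
    have ha3 : (c1 : ℕ) = (S.card + (c1 : ℕ)) % (m + 1 + m) - S.card := by rw [hmod1]; omega
    have hb1 : S.card + W.card ≤ (m + 1 + Sᶜ.card + ((c2 : ℕ) - W.card)) % (m + 1 + m) := by
      rw [hmod2]; omega
    have hb2 : Sᶜ.card ≤ ((m + 1 + Sᶜ.card + ((c2 : ℕ) - W.card)) % (m + 1 + m))
        - (S.card + W.card) := by rw [hmod2]; omega
    have hb3 : (c2 : ℕ) = W.card + (((m + 1 + Sᶜ.card + ((c2 : ℕ) - W.card)) % (m + 1 + m))
        - (S.card + W.card) - Sᶜ.card) := by rw [hmod2]; omega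
    have hv1 : (τ (⟨(S.card + (c1 : ℕ)) % (m + 1 + m), Nat.mod_lt _ (by omega)⟩
        : Fin (m + 1 + m)) : ℕ) = r + (σ c1 : ℕ) :=
      fsPerm_unionFS_lo2 hrs S W _ c1 ha1 ha2 ha3
    have hv2 : (τ (⟨(m + 1 + Sᶜ.card + ((c2 : ℕ) - W.card)) % (m + 1 + m),
        Nat.mod_lt _ (by omega)⟩ : Fin (m + 1 + m)) : ℕ) = r + (σ c2 : ℕ) :=
      fsPerm_unionFS_hi2 hrs S W _ c2 hb1 hb2 hb3
    have hinv' : (σ c2 : ℕ) < (σ c1 : ℕ) := hinv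
    refine ⟨?_, ?_, ?_, ?_⟩
    · show ((S.card + (c1 : ℕ)) % (m + 1 + m))
        < ((m + 1 + Sᶜ.card + ((c2 : ℕ) - W.card)) % (m + 1 + m))
      rw [hmod1, hmod2]
      omega
    · show (τ _ : ℕ) < (τ _ : ℕ)
      omega
    · omega
    · omega
  · rintro ⟨q1, q2⟩ hq
    simp only [Finset.mem_filter, Finset.mem_univ, true_and] at hq
    obtain ⟨hlt, hinv, hr1, hr2⟩ := hq
    obtain ⟨hq1m, hq2m⟩ := hcross q1 q2 hlt hinv
    have hq1S : S.card ≤ (q1 : ℕ) := by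
      by_contra hc
      push_neg at hc
      have h := fsPerm_unionFS_lo1 hrs S W q1 (by omega)
      have h' : (τ q1 : ℕ) < r := h
      omega
    have hq2S : Sᶜ.card ≤ (q2 : ℕ) - (S.card + W.card) := by
      by_contra hc
      push_neg at hc
      have h := fsPerm_unionFS_hi1 hrs S W q2 (by omega) (by omega)
      have h' : (τ q2 : ℕ) < r := h
      omega
    have hq2lt := q2.isLt
    have hmod1 : ((q1 : ℕ) - S.card) % (p + 1) = (q1 : ℕ) - S.card :=
      Nat.mod_eq_of_lt (by omega)
    have hmod2 : (W.card + ((q2 : ℕ) - (m + 1) - Sᶜ.card)) % (p + 1)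
        = W.card + ((q2 : ℕ) - (m + 1) - Sᶜ.card) := Nat.mod_eq_of_lt (by omega)
    dsimp only
    have hmod3 : (S.card + (((q1 : ℕ) - S.card) % (p + 1))) % (m + 1 + m) = (q1 : ℕ) := by
      rw [hmod1, Nat.mod_eq_of_lt (by omega)]
      omega
    have hmod4 : (m + 1 + Sᶜ.card + (((W.card + ((q2 : ℕ) - (m + 1) - Sᶜ.card)) % (p + 1))
        - W.card)) % (m + 1 + m) = (q2 : ℕ) := by
      rw [hmod2, Nat.mod_eq_of_lt (by omega)]
      omega
    exact Prod.ext (Fin.ext hmod3) (Fin.ext hmod4)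
  · rintro ⟨c1, c2⟩ hc
    simp only [Finset.mem_filter, Finset.mem_univ, true_and] at hc
    obtain ⟨hlt, hinv⟩ := hc
    obtain ⟨hc1m, hc2m⟩ := hcrossσ c1 c2 hlt hinv
    have hc1lt := c1.isLt
    have hc2lt := c2.isLt
    have hmod1 : (S.card + (c1 : ℕ)) % (m + 1 + m) = S.card + (c1 : ℕ) :=
      Nat.mod_eq_of_lt (by omega)
    have hmod2 : (m + 1 + Sᶜ.card + ((c2 : ℕ) - W.card)) % (m + 1 + m)
        = m + 1 + Sᶜ.card + ((c2 : ℕ) - W.card) := Nat.mod_eq_of_lt (by omega)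
    dsimp only
    have hmod3 : (((S.card + (c1 : ℕ)) % (m + 1 + m)) - S.card) % (p + 1) = (c1 : ℕ) := by
      rw [hmod1, Nat.mod_eq_of_lt (by omega)]
      omega
    have hmod4 : (W.card + ((((m + 1 + Sᶜ.card + ((c2 : ℕ) - W.card)) % (m + 1 + m))
        - (m + 1) - Sᶜ.card))) % (p + 1) = (c2 : ℕ) := by
      rw [hmod2, Nat.mod_eq_of_lt (by omega)]
      omega
    exact Prod.ext (Fin.ext hmod3) (Fin.ext hmod4)
  · rintro ⟨q1, q2⟩ hq
    simp only [Finset.mem_filter, Finset.mem_univ, true_and] at hq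
    obtain ⟨hlt, hinv, hr1, hr2⟩ := hq
    obtain ⟨hq1m, hq2m⟩ := hcross q1 q2 hlt hinv
    have hq1S : S.card ≤ (q1 : ℕ) := by
      by_contra hc
      push_neg at hc
      have h := fsPerm_unionFS_lo1 hrs S W q1 (by omega)
      have h' : (τ q1 : ℕ) < r := h
      omega
    have hq2S : Sᶜ.card ≤ (q2 : ℕ) - (S.card + W.card) := by
      by_contra hc
      push_neg at hc
      have h := fsPerm_unionFS_hi1 hrs S W q2 (by omega) (by omega)
      have h' : (τ q2 : ℕ) < r := h
      omega
    have hq2lt := q2.isLt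
    have hmod1 : ((q1 : ℕ) - S.card) % (p + 1) = (q1 : ℕ) - S.card :=
      Nat.mod_eq_of_lt (by omega)
    have hmod2 : (W.card + ((q2 : ℕ) - (m + 1) - Sᶜ.card)) % (p + 1)
        = W.card + ((q2 : ℕ) - (m + 1) - Sᶜ.card) := Nat.mod_eq_of_lt (by omega)
    have hv1 : (τ q1 : ℕ) = r + (σ (⟨((q1 : ℕ) - S.card) % (p + 1),
        Nat.mod_lt _ (Nat.succ_pos p)⟩ : Fin (p + 1)) : ℕ) :=
      fsPerm_unionFS_lo2 hrs S W q1 _ hq1S (by omega) hmod1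
    have hb2' : (W.card + ((q2 : ℕ) - (m + 1) - Sᶜ.card)) % (p + 1)
        = W.card + ((q2 : ℕ) - (S.card + W.card) - Sᶜ.card) := by
      rw [hSW]; exact hmod2
    have hv2 : (τ q2 : ℕ) = r + (σ (⟨(W.card + ((q2 : ℕ) - (m + 1) - Sᶜ.card)) % (p + 1),
        Nat.mod_lt _ (Nat.succ_pos p)⟩ : Fin (p + 1)) : ℕ) :=
      fsPerm_unionFS_hi2 hrs S W q2 _ (by omega) (by omega) hb2'
    dsimp only
    rw [hehi (τ q1) _ hv1, hehi (τ q2) _ hv2]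

end Sign
section Main4

variable {K : Type*} [Field K] [CharZero K] {A : Type*} [AddCommGroup A] [Module K A]
variable {m : ℕ} {br : (Fin (m + 1) → A) → A} {𝒜 : ℤ → Submodule K A}

set_option maxHeartbeats 2000000 in
lemma jac_term_eval (α : A) (hα : α ∈ 𝒜 0)
    (hsmul : ∀ (x : Fin (m + 1) → A) (i : Fin (m + 1)) (c : K) (a : A),
        br (Function.update x i (c • a)) = c • br (Function.update x i a))
    (hdeg : ∀ (d : Fin (m + 1) → ℤ) (x : Fin (m + 1) → A),
        (∀ j, x j ∈ 𝒜 (d j)) → br x ∈ 𝒜 ((∑ j, d j) + 1))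
    (hsym : ∀ (d : Fin (m + 1) → ℤ) (x : Fin (m + 1) → A) (σ : Equiv.Perm (Fin (m + 1))),
        (∀ j, x j ∈ 𝒜 (d j)) → br (x ∘ σ) = koszulSign K d σ • br x)
    {p r : ℕ} (hrs : r + (p + 1) = m + 1 + m)
    (d : Fin (p + 1) → ℤ) (x : Fin (p + 1) → A) (hx : ∀ j, x j ∈ 𝒜 (d j))
    (y : Fin (m + 1 + m) → A) (e : Fin (m + 1 + m) → ℤ)
    (hylo : ∀ t : Fin (m + 1 + m), (t : ℕ) < r → y t = α)
    (hyhi : ∀ (t : Fin (m + 1 + m)) (c : Fin (p + 1)), (t : ℕ) = r + (c : ℕ) → y t = x c)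
    (helo : ∀ t : Fin (m + 1 + m), (t : ℕ) < r → e t = 0)
    (hehi : ∀ (t : Fin (m + 1 + m)) (c : Fin (p + 1)), (t : ℕ) = r + (c : ℕ) → e t = d c)
    (S : Finset (Fin r)) (W : Finset (Fin (p + 1))) (hSW : S.card + W.card = m + 1)
    (i : Fin (p + 1)) (hW : W.card = (i : ℕ) + 1) :
    koszulSign K e (fsPerm (unionFS hrs S W)) •
      br (Fin.cons
        (br (fun j : Fin (m + 1) =>
          y ((fsPerm (unionFS hrs S W)) ⟨(j : ℕ), by have := j.isLt; omega⟩)))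
        (fun j : Fin m =>
          y ((fsPerm (unionFS hrs S W)) ⟨m + 1 + (j : ℕ), by have := j.isLt; omega⟩)))
    = (((m - (i : ℕ)).factorial : K) * (((m - (p - (i : ℕ))).factorial : K))) •
      (koszulSign K d (fsPerm W) •
        twistOp K m br α (p - (i : ℕ) + 1)
          (Fin.cons
            (twistOp K m br α ((i : ℕ) + 1)
              (fun j : Fin ((i : ℕ) + 1) =>
                x (fsPerm W ⟨(j : ℕ), by have := j.isLt; have := i.isLt; omega⟩)))
            (fun j : Fin (p - (i : ℕ)) =>
              x (fsPerm W ⟨(i : ℕ) + 1 + (j : ℕ), by have := j.isLt; omega⟩)))) := by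
  have hilt := i.isLt
  have hSle := card_le_fin S
  have hWle := card_le_fin W
  have hSc : Sᶜ.card = r - S.card := compl_card S
  have hWc : Wᶜ.card = p + 1 - W.card := compl_card W
  have hScard : S.card = m - (i : ℕ) := by omega
  have him : (i : ℕ) ≤ m := by omega
  have hpim : p - (i : ℕ) ≤ m := by omega
  have hki : (i : ℕ) + 1 ≤ m + 1 := by omega
  have hki0 : 0 < (i : ℕ) + 1 := Nat.succ_pos _
  have hk' : p - (i : ℕ) + 1 ≤ m + 1 := by omega
  have hk0' : 0 < p - (i : ℕ) + 1 := Nat.succ_pos _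
  -- the inner tuple is a padded tuple
  have hinner : (fun j : Fin (m + 1) =>
        y ((fsPerm (unionFS hrs S W)) ⟨(j : ℕ), by have := j.isLt; omega⟩))
      = padF m ((i : ℕ) + 1) hki α (fun j : Fin ((i : ℕ) + 1) =>
          x (fsPerm W ⟨(j : ℕ), by have := j.isLt; have := i.isLt; omega⟩)) := by
    funext j
    have hjlt := j.isLt
    by_cases hj : (j : ℕ) < m + 1 - ((i : ℕ) + 1)
    · rw [padF_lo _ _ _ _ hj]
      exact hylo _ (fsPerm_unionFS_lo1 hrs S W _ ((by omega : (j : ℕ) < S.card)))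
    · rw [padF_hi α hki hki0 _ _ hj]
      have hτv : ((fsPerm (unionFS hrs S W)) (⟨(j : ℕ), by omega⟩ : Fin (m + 1 + m)) : ℕ)
          = r + ((fsPerm W) (⟨(j : ℕ) - (m + 1 - ((i : ℕ) + 1)), by omega⟩ : Fin (p + 1)) : ℕ) :=
        fsPerm_unionFS_lo2 hrs S W _ _ (by omega : S.card ≤ (j : ℕ))
          (by omega : (j : ℕ) < S.card + W.card)
          (by omega : (j : ℕ) - (m + 1 - ((i : ℕ) + 1)) = (j : ℕ) - S.card)
      have h1 := hyhi _ _ hτv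
      exact h1.trans (congrArg x (congrArg (fsPerm W) (Fin.ext rfl)))
  -- br of the inner tuple
  have hne1 : ((m - (i : ℕ)).factorial : K) ≠ 0 := by
    exact_mod_cast (m - (i : ℕ)).factorial_ne_zero
  have hne2 : ((m - (p - (i : ℕ))).factorial : K) ≠ 0 := by
    exact_mod_cast (m - (p - (i : ℕ))).factorial_ne_zero
  have hbrinner : br (fun j : Fin (m + 1) =>
        y ((fsPerm (unionFS hrs S W)) ⟨(j : ℕ), by have := j.isLt; omega⟩))
      = ((m - (i : ℕ)).factorial : K) • twistOp K m br α ((i : ℕ) + 1)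
          (fun j : Fin ((i : ℕ) + 1) =>
            x (fsPerm W ⟨(j : ℕ), by have := j.isLt; have := i.isLt; omega⟩)) := by
    rw [hinner, twistOp_eq α hki, show m + 1 - ((i : ℕ) + 1) = m - (i : ℕ) by omega,
      smul_inv_smul₀ hne1]
  -- the outer tuple, prefixed by an arbitrary element, is a permuted padded tuple
  have houter : ∀ I : A,
      (Fin.cons I (fun j : Fin m =>
          y ((fsPerm (unionFS hrs S W)) ⟨m + 1 + (j : ℕ), by have := j.isLt; omega⟩))
        : Fin (m + 1) → A)
      = (padF m (p - (i : ℕ) + 1) hk' α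
          (Fin.cons I (fun j : Fin (p - (i : ℕ)) =>
            x (fsPerm W ⟨(i : ℕ) + 1 + (j : ℕ), by have := j.isLt; omega⟩))))
        ∘ (mvPerm (⟨m + 1 - (p - (i : ℕ) + 1), by omega⟩ : Fin (m + 1))) := by
    intro I
    funext j
    have hjlt := j.isLt
    rw [Function.comp_apply]
    by_cases h0 : (j : ℕ) = 0
    · rw [mvPerm_zero _ j h0, cons_vzero I _ j h0]
      rw [padF_hi α hk' hk0' _ _
        (by omega : ¬ m + 1 - (p - (i : ℕ) + 1) < m + 1 - (p - (i : ℕ) + 1))]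
      exact (cons_vzero I _ _
        (by omega : m + 1 - (p - (i : ℕ) + 1) - (m + 1 - (p - (i : ℕ) + 1)) = 0)).symm
    · by_cases h1 : (j : ℕ) ≤ m + 1 - (p - (i : ℕ) + 1)
      · rw [mvPerm_mid (⟨m + 1 - (p - (i : ℕ) + 1), by omega⟩ : Fin (m + 1)) j h0 h1, cons_vsucc I _ j ⟨(j : ℕ) - 1, by omega⟩
          (by omega : (j : ℕ) = ((j : ℕ) - 1) + 1)]
        rw [padF_lo _ _ _ _ (by omega : (j : ℕ) - 1 < m + 1 - (p - (i : ℕ) + 1))]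
        refine hylo _ (fsPerm_unionFS_hi1 hrs S W _
          (by omega : S.card + W.card ≤ m + 1 + ((j : ℕ) - 1))
          (by omega : m + 1 + ((j : ℕ) - 1) - (S.card + W.card) < Sᶜ.card))
      · rw [mvPerm_hi (⟨m + 1 - (p - (i : ℕ) + 1), by omega⟩ : Fin (m + 1)) j h0 h1, cons_vsucc I _ j ⟨(j : ℕ) - 1, by omega⟩
          (by omega : (j : ℕ) = ((j : ℕ) - 1) + 1)]
        rw [padF_hi α hk' hk0' _ j (by omega : ¬ (j : ℕ) < m + 1 - (p - (i : ℕ) + 1))]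
        rw [cons_vsucc I _ (resFin m (p - (i : ℕ) + 1) hk0' j)
          ⟨(j : ℕ) - (m + 1 - (p - (i : ℕ) + 1)) - 1, by omega⟩
          (by omega : (j : ℕ) - (m + 1 - (p - (i : ℕ) + 1))
            = ((j : ℕ) - (m + 1 - (p - (i : ℕ) + 1)) - 1) + 1)]
        dsimp only
        have hτv : ((fsPerm (unionFS hrs S W))
              (⟨m + 1 + ((j : ℕ) - 1), by omega⟩ : Fin (m + 1 + m)) : ℕ)
            = r + ((fsPerm W) (⟨(i : ℕ) + 1 + ((j : ℕ) - (m + 1 - (p - (i : ℕ) + 1)) - 1),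
                by omega⟩ : Fin (p + 1)) : ℕ) :=
          fsPerm_unionFS_hi2 hrs S W _ _
            (by omega : S.card + W.card ≤ m + 1 + ((j : ℕ) - 1))
            (by omega : Sᶜ.card ≤ m + 1 + ((j : ℕ) - 1) - (S.card + W.card))
            (by omega : (i : ℕ) + 1 + ((j : ℕ) - (m + 1 - (p - (i : ℕ) + 1)) - 1)
              = W.card + (m + 1 + ((j : ℕ) - 1) - (S.card + W.card) - Sᶜ.card))
        have h2 := hyhi _ _ hτv
        exact h2.trans (congrArg x (congrArg (fsPerm W) (Fin.ext rfl)))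
  -- membership of the outer padded tuple entries
  have hImem : br (fun j : Fin (m + 1) =>
        y ((fsPerm (unionFS hrs S W)) ⟨(j : ℕ), by have := j.isLt; omega⟩))
      ∈ 𝒜 ((∑ t : Fin ((i : ℕ) + 1),
          d (fsPerm W ⟨(t : ℕ), by have := t.isLt; have := i.isLt; omega⟩)) + 1) := by
    rw [hinner]
    have h := hdeg (padZ m ((i : ℕ) + 1) hki (fun t : Fin ((i : ℕ) + 1) =>
        d (fsPerm W ⟨(t : ℕ), by have := t.isLt; have := i.isLt; omega⟩)))
      (padF m ((i : ℕ) + 1) hki α (fun j : Fin ((i : ℕ) + 1) =>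
        x (fsPerm W ⟨(j : ℕ), by have := j.isLt; have := i.isLt; omega⟩)))
      (padF_mem hα hki (fun t => hx _))
    rwa [padZ_sum] at h
  have hconsmem : ∀ t : Fin (p - (i : ℕ) + 1),
      (Fin.cons (br (fun j : Fin (m + 1) =>
          y ((fsPerm (unionFS hrs S W)) ⟨(j : ℕ), by have := j.isLt; omega⟩)))
        (fun j : Fin (p - (i : ℕ)) =>
          x (fsPerm W ⟨(i : ℕ) + 1 + (j : ℕ), by have := j.isLt; omega⟩))
        : Fin (p - (i : ℕ) + 1) → A) t
      ∈ 𝒜 ((Fin.cons ((∑ t : Fin ((i : ℕ) + 1),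
          d (fsPerm W ⟨(t : ℕ), by have := t.isLt; have := i.isLt; omega⟩)) + 1)
        (fun j : Fin (p - (i : ℕ)) =>
          d (fsPerm W ⟨(i : ℕ) + 1 + (j : ℕ), by have := j.isLt; omega⟩))
        : Fin (p - (i : ℕ) + 1) → ℤ) t) := by
    intro t
    refine Fin.cases ?_ ?_ t
    · rw [Fin.cons_zero, Fin.cons_zero]
      exact hImem
    · intro tt
      rw [Fin.cons_succ, Fin.cons_succ]
      exact hx _
  -- main computation
  rw [houter (br (fun j : Fin (m + 1) =>
    y ((fsPerm (unionFS hrs S W)) ⟨(j : ℕ), by have := j.isLt; omega⟩)))]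
  rw [hsym (padZ m (p - (i : ℕ) + 1) hk'
      (Fin.cons ((∑ t : Fin ((i : ℕ) + 1),
          d (fsPerm W ⟨(t : ℕ), by have := t.isLt; have := i.isLt; omega⟩)) + 1)
        (fun j : Fin (p - (i : ℕ)) =>
          d (fsPerm W ⟨(i : ℕ) + 1 + (j : ℕ), by have := j.isLt; omega⟩))))
    _ (mvPerm (⟨m + 1 - (p - (i : ℕ) + 1), by omega⟩ : Fin (m + 1)))
    (padF_mem hα hk' hconsmem)]
  have hκ1 : koszulSign K (padZ m (p - (i : ℕ) + 1) hk'
      (Fin.cons ((∑ t : Fin ((i : ℕ) + 1),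
          d (fsPerm W ⟨(t : ℕ), by have := t.isLt; have := i.isLt; omega⟩)) + 1)
        (fun j : Fin (p - (i : ℕ)) =>
          d (fsPerm W ⟨(i : ℕ) + 1 + (j : ℕ), by have := j.isLt; omega⟩))))
      (mvPerm (⟨m + 1 - (p - (i : ℕ) + 1), by omega⟩ : Fin (m + 1))) = (1 : K) := by
    apply koszulSign_eq_one
    intro q hlt hinv
    obtain ⟨h0v, hlt2⟩ := mvPerm_inversion _ _ _ hlt hinv
    rw [padZ_lo hk' _ _ hlt2, mul_zero]
  rw [hκ1, one_smul]
  rw [hbrinner]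
  rw [br_padF_cons_smul α hsmul hk']
  have hbrout : br (padF m (p - (i : ℕ) + 1) hk' α
      (Fin.cons (twistOp K m br α ((i : ℕ) + 1)
          (fun j : Fin ((i : ℕ) + 1) =>
            x (fsPerm W ⟨(j : ℕ), by have := j.isLt; have := i.isLt; omega⟩)))
        (fun j : Fin (p - (i : ℕ)) =>
          x (fsPerm W ⟨(i : ℕ) + 1 + (j : ℕ), by have := j.isLt; omega⟩))))
      = ((m - (p - (i : ℕ))).factorial : K) • twistOp K m br α (p - (i : ℕ) + 1)
        (Fin.cons (twistOp K m br α ((i : ℕ) + 1)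
            (fun j : Fin ((i : ℕ) + 1) =>
              x (fsPerm W ⟨(j : ℕ), by have := j.isLt; have := i.isLt; omega⟩)))
          (fun j : Fin (p - (i : ℕ)) =>
            x (fsPerm W ⟨(i : ℕ) + 1 + (j : ℕ), by have := j.isLt; omega⟩))) := by
    rw [twistOp_eq α hk', show m + 1 - (p - (i : ℕ) + 1) = m - (p - (i : ℕ)) by omega,
      smul_inv_smul₀ hne2]
  rw [hbrout]
  rw [koszulSign_union hrs d e helo hehi S W hSW]
  rw [smul_smul, smul_smul, smul_smul]
  congr 1
  ring

end Main4
section Main5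

variable {K : Type*} [Field K] [CharZero K] {A : Type*} [AddCommGroup A] [Module K A]
variable {m : ℕ} {br : (Fin (m + 1) → A) → A} {𝒜 : ℤ → Submodule K A}

lemma gen_jacobi (α : A) (hα : α ∈ 𝒜 0)
    (hsmul : ∀ (x : Fin (m + 1) → A) (i : Fin (m + 1)) (c : K) (a : A),
        br (Function.update x i (c • a)) = c • br (Function.update x i a))
    (hdeg : ∀ (d : Fin (m + 1) → ℤ) (x : Fin (m + 1) → A),
        (∀ j, x j ∈ 𝒜 (d j)) → br x ∈ 𝒜 ((∑ j, d j) + 1))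
    (hsym : ∀ (d : Fin (m + 1) → ℤ) (x : Fin (m + 1) → A) (σ : Equiv.Perm (Fin (m + 1))),
        (∀ j, x j ∈ 𝒜 (d j)) → br (x ∘ σ) = koszulSign K d σ • br x)
    (hjac : ∀ (d : Fin (m + 1 + m) → ℤ) (x : Fin (m + 1 + m) → A),
        (∀ j, x j ∈ 𝒜 (d j)) →
        ∑ σ ∈ Finset.univ.filter
            (fun σ : Equiv.Perm (Fin (m + 1 + m)) => IsShuffle (m + 1) σ),
          koszulSign K d σ •
            br (Fin.cons
              (br (fun j : Fin (m + 1) => x (σ ⟨(j : ℕ), by have := j.isLt; lia⟩)))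
              (fun j : Fin m => x (σ ⟨m + 1 + (j : ℕ), by have := j.isLt; lia⟩))) = 0)
    (hMC : br (fun _ => α) = 0)
    (p : ℕ) (d : Fin (p + 1) → ℤ) (x : Fin (p + 1) → A) (hx : ∀ j, x j ∈ 𝒜 (d j)) :
    ∑ i : Fin (p + 1),
      ∑ σ ∈ Finset.univ.filter
          (fun σ : Equiv.Perm (Fin (p + 1)) => IsShuffle ((i : ℕ) + 1) σ),
        koszulSign K d σ •
          twistOp K m br α (p - (i : ℕ) + 1)
            (Fin.cons
              (twistOp K m br α ((i : ℕ) + 1)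
                (fun j : Fin ((i : ℕ) + 1) =>
                  x (σ ⟨(j : ℕ), by have := j.isLt; have := i.isLt; lia⟩)))
              (fun j : Fin (p - (i : ℕ)) =>
                x (σ ⟨(i : ℕ) + 1 + (j : ℕ), by have := j.isLt; lia⟩))) = 0 := by
  by_cases hp : p ≤ 2 * m
  case neg =>
    apply Finset.sum_eq_zero
    intro i _
    apply Finset.sum_eq_zero
    intro σ _
    rcases le_or_gt ((i : ℕ) + 1) (m + 1) with hi | hi
    · have hilt := i.isLt
      rw [twistOp_eq_zero α (by omega : ¬ p - (i : ℕ) + 1 ≤ m + 1), smul_zero]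
    · rw [twistOp_eq_zero α (by omega : ¬ (i : ℕ) + 1 ≤ m + 1)]
      rw [twistOp_of_zero_entry α hsmul _ (0 : Fin (p - (i : ℕ) + 1)) (Fin.cons_zero _ _),
        smul_zero]
  case pos =>
  obtain ⟨r, hrs⟩ : ∃ r, r + (p + 1) = m + 1 + m := ⟨2 * m - p, by omega⟩
  obtain ⟨y, hylo, hyhi⟩ : ∃ y : Fin (m + 1 + m) → A,
      (∀ t : Fin (m + 1 + m), (t : ℕ) < r → y t = α) ∧
      (∀ (t : Fin (m + 1 + m)) (c : Fin (p + 1)), (t : ℕ) = r + (c : ℕ) → y t = x c) :=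
    ⟨fun t => if h : (t : ℕ) < r then α else x ⟨(t : ℕ) - r, by have := t.isLt; omega⟩,
     fun t h => dif_pos h,
     fun t c hc => by
       dsimp only
       rw [dif_neg (by omega)]
       exact congrArg x (Fin.ext (show (t : ℕ) - r = (c : ℕ) by omega))⟩
  obtain ⟨e, helo, hehi⟩ : ∃ e : Fin (m + 1 + m) → ℤ,
      (∀ t : Fin (m + 1 + m), (t : ℕ) < r → e t = 0) ∧
      (∀ (t : Fin (m + 1 + m)) (c : Fin (p + 1)), (t : ℕ) = r + (c : ℕ) → e t = d c) :=
    ⟨fun t => if h : (t : ℕ) < r then 0 else d ⟨(t : ℕ) - r, by have := t.isLt; omega⟩,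
     fun t h => dif_pos h,
     fun t c hc => by
       dsimp only
       rw [dif_neg (by omega)]
       exact congrArg d (Fin.ext (show (t : ℕ) - r = (c : ℕ) by omega))⟩
  have hye : ∀ t, y t ∈ 𝒜 (e t) := by
    intro t
    by_cases h : (t : ℕ) < r
    · rw [hylo t h, helo t h]
      exact hα
    · have hlt := t.isLt
      rw [hyhi t ⟨(t : ℕ) - r, by omega⟩ (by omega : (t : ℕ) = r + ((t : ℕ) - r)),
        hehi t ⟨(t : ℕ) - r, by omega⟩ (by omega : (t : ℕ) = r + ((t : ℕ) - r))]
      exact hx _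
  have J := hjac e y hye
  rw [sum_shuffle_eq_sum_powersetCard (by omega : m + 1 ≤ m + 1 + m)] at J
  set D := (Finset.univ : Finset (Finset (Fin r) × Finset (Fin (p + 1)))).filter
    (fun SW => SW.1.card + SW.2.card = m + 1) with hD
  set G : Finset (Fin r) × Finset (Fin (p + 1)) → A := fun SW =>
    koszulSign K e (fsPerm (unionFS hrs SW.1 SW.2)) •
      br (Fin.cons
        (br (fun j : Fin (m + 1) =>
          y ((fsPerm (unionFS hrs SW.1 SW.2)) ⟨(j : ℕ), by have := j.isLt; omega⟩)))
        (fun j : Fin m =>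
          y ((fsPerm (unionFS hrs SW.1 SW.2)) ⟨m + 1 + (j : ℕ), by have := j.isLt; omega⟩)))
    with hG
  have J2 : ∑ SW ∈ D, G SW = 0 := by
    rw [← J]
    refine (Finset.sum_nbij' (fun T => (SofT hrs T, WofT hrs T))
      (fun SW => unionFS hrs SW.1 SW.2) ?_ ?_ ?_ ?_ ?_).symm
    · intro T hT
      rw [Finset.mem_powersetCard_univ] at hT
      rw [hD, Finset.mem_filter]
      refine ⟨Finset.mem_univ _, ?_⟩
      rw [← card_unionFS hrs, unionFS_SofT_WofT hrs T]
      exact hT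
    · intro SW hSW
      rw [hD, Finset.mem_filter] at hSW
      rw [Finset.mem_powersetCard_univ, card_unionFS hrs]
      exact hSW.2
    · intro T hT
      exact unionFS_SofT_WofT hrs T
    · intro SW hSW
      exact Prod.ext (SofT_unionFS hrs SW.1 SW.2) (WofT_unionFS hrs SW.1 SW.2)
    · intro T hT
      rw [hG]
      dsimp only
      rw [unionFS_SofT_WofT hrs T]
  -- terms with empty W vanish
  have hzero : ∀ SW ∈ D.filter (fun SW => SW.2.card = 0), G SW = 0 := by
    rintro ⟨S, W⟩ hSW'
    rw [Finset.mem_filter, hD, Finset.mem_filter] at hSW'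
    obtain ⟨⟨-, hsum⟩, hW0⟩ := hSW'
    dsimp only at hsum hW0
    rw [hG]
    dsimp only
    have hin : (fun j : Fin (m + 1) =>
        y ((fsPerm (unionFS hrs S W)) ⟨(j : ℕ), by have := j.isLt; omega⟩)) = fun _ => α := by
      funext j
      exact hylo _ (fsPerm_unionFS_lo1 hrs S W _ (by omega : (j : ℕ) < S.card))
    rw [hin, hMC]
    exact smul_eq_zero_of_right _ (br_zero hsmul _ 0 (Fin.cons_zero _ _))
  have hz0 : ∑ SW ∈ D.filter (fun SW => SW.2.card = 0), G SW = 0 := Finset.sum_eq_zero hzero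
  have hsplit := Finset.sum_filter_add_sum_filter_not D (fun SW => SW.2.card = 0) G
  rw [hz0, zero_add] at hsplit
  have hJ3 : ∑ SW ∈ D.filter (fun SW => ¬ SW.2.card = 0), G SW = 0 := by
    rw [hsplit]; exact J2
  have hfibsplit := Finset.sum_fiberwise_of_maps_to
    (s := D.filter (fun SW => ¬ SW.2.card = 0)) (t := (Finset.univ : Finset (Fin (p + 1))))
    (g := fun SW => (⟨SW.2.card - 1, by have := card_le_fin SW.2; omega⟩ : Fin (p + 1)))
    (fun _ _ => Finset.mem_univ _) G
  have hfibeq : ∀ i : Fin (p + 1),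
      (D.filter (fun SW => ¬ SW.2.card = 0)).filter
        (fun SW => (⟨SW.2.card - 1, by have := card_le_fin SW.2; omega⟩ : Fin (p + 1)) = i)
      = D.filter (fun SW => SW.2.card = (i : ℕ) + 1) := by
    intro i
    ext SW
    simp only [Finset.filter_filter, Finset.mem_filter]
    constructor
    · rintro ⟨h1, h2, h3⟩
      refine ⟨h1, ?_⟩
      have h4 : SW.2.card - 1 = (i : ℕ) := congrArg Fin.val h3
      omega
    · rintro ⟨h1, h2⟩
      exact ⟨h1, by omega, Fin.ext (by omega : SW.2.card - 1 = (i : ℕ))⟩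
  have hfib : ∀ i : Fin (p + 1),
      ∑ SW ∈ D.filter (fun SW => SW.2.card = (i : ℕ) + 1), G SW
      = (r.factorial : K) •
          ∑ W ∈ Finset.powersetCard ((i : ℕ) + 1) (Finset.univ : Finset (Fin (p + 1))),
            koszulSign K d (fsPerm W) •
              twistOp K m br α (p - (i : ℕ) + 1)
                (Fin.cons
                  (twistOp K m br α ((i : ℕ) + 1)
                    (fun j : Fin ((i : ℕ) + 1) =>
                      x (fsPerm W ⟨(j : ℕ), by have := j.isLt; have := i.isLt; omega⟩)))
                  (fun j : Fin (p - (i : ℕ)) =>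
                    x (fsPerm W ⟨(i : ℕ) + 1 + (j : ℕ), by have := j.isLt; omega⟩))) := by
    intro i
    have hile : (i : ℕ) ≤ p := by have := i.isLt; omega
    by_cases hgood : (i : ℕ) ≤ m ∧ m - (i : ℕ) ≤ r
    · obtain ⟨him, hmr⟩ := hgood
      have hDi : D.filter (fun SW => SW.2.card = (i : ℕ) + 1)
          = (Finset.powersetCard (m - (i : ℕ)) (Finset.univ : Finset (Fin r))) ×ˢ
            (Finset.powersetCard ((i : ℕ) + 1) (Finset.univ : Finset (Fin (p + 1)))) := by
        ext SW
        rw [Finset.mem_filter, hD, Finset.mem_filter, Finset.mem_product,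
          Finset.mem_powersetCard_univ, Finset.mem_powersetCard_univ]
        constructor
        · rintro ⟨⟨-, h1⟩, h2⟩
          exact ⟨by omega, h2⟩
        · rintro ⟨h1, h2⟩
          exact ⟨⟨Finset.mem_univ _, by omega⟩, h2⟩
      rw [hDi, Finset.sum_product]
      have hterm : ∀ S ∈ Finset.powersetCard (m - (i : ℕ)) (Finset.univ : Finset (Fin r)),
          ∑ W ∈ Finset.powersetCard ((i : ℕ) + 1) (Finset.univ : Finset (Fin (p + 1))),
            G (S, W)
          = (((m - (i : ℕ)).factorial : K) * (((m - (p - (i : ℕ))).factorial : K))) •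
            ∑ W ∈ Finset.powersetCard ((i : ℕ) + 1) (Finset.univ : Finset (Fin (p + 1))),
              koszulSign K d (fsPerm W) •
                twistOp K m br α (p - (i : ℕ) + 1)
                  (Fin.cons
                    (twistOp K m br α ((i : ℕ) + 1)
                      (fun j : Fin ((i : ℕ) + 1) =>
                        x (fsPerm W ⟨(j : ℕ), by have := j.isLt; have := i.isLt; omega⟩)))
                    (fun j : Fin (p - (i : ℕ)) =>
                      x (fsPerm W ⟨(i : ℕ) + 1 + (j : ℕ), by have := j.isLt; omega⟩))) := by
        intro S hS
        rw [Finset.mem_powersetCard_univ] at hS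
        rw [Finset.smul_sum]
        apply Finset.sum_congr rfl
        intro W hW
        rw [Finset.mem_powersetCard_univ] at hW
        rw [hG]
        dsimp only
        exact jac_term_eval α hα hsmul hdeg hsym hrs d x hx y e hylo hyhi helo hehi
          S W (by omega) i hW
      rw [Finset.sum_congr rfl hterm, Finset.sum_const, Finset.card_powersetCard,
        Finset.card_univ, Fintype.card_fin]
      rw [← Nat.cast_smul_eq_nsmul K, smul_smul]
      congr 1
      have hnat : (r.choose (m - (i : ℕ))) * (m - (i : ℕ)).factorial
          * (r - (m - (i : ℕ))).factorial = r.factorial :=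
        Nat.choose_mul_factorial_mul_factorial hmr
      have hr2 : r - (m - (i : ℕ)) = m - (p - (i : ℕ)) := by omega
      rw [hr2] at hnat
      rw [← hnat]
      push_cast
      ring
    · have hDi0 : D.filter (fun SW => SW.2.card = (i : ℕ) + 1) = ∅ := by
        rw [Finset.filter_eq_empty_iff]
        intro SW hSWD
        rw [hD, Finset.mem_filter] at hSWD
        have hWle := card_le_fin SW.2
        have hSle := card_le_fin SW.1
        intro hc
        rcases le_or_gt (i : ℕ) m with h1 | h1
        · have h2 : ¬ m - (i : ℕ) ≤ r := by
            intro h3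
            exact hgood ⟨h1, h3⟩
          omega
        · omega
      rw [hDi0, Finset.sum_empty]
      symm
      rw [smul_eq_zero]
      right
      apply Finset.sum_eq_zero
      intro W hW
      rcases le_or_gt (i : ℕ) m with h1 | h1
      · have h2 : ¬ m - (i : ℕ) ≤ r := by
          intro h3
          exact hgood ⟨h1, h3⟩
        rw [twistOp_eq_zero α (by omega : ¬ p - (i : ℕ) + 1 ≤ m + 1), smul_zero]
      · rw [twistOp_eq_zero α (by omega : ¬ (i : ℕ) + 1 ≤ m + 1),
          twistOp_of_zero_entry α hsmul _ (0 : Fin (p - (i : ℕ) + 1)) (Fin.cons_zero _ _),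
          smul_zero]
  have hTS : ∑ i : Fin (p + 1),
      ∑ σ ∈ Finset.univ.filter
          (fun σ : Equiv.Perm (Fin (p + 1)) => IsShuffle ((i : ℕ) + 1) σ),
        koszulSign K d σ •
          twistOp K m br α (p - (i : ℕ) + 1)
            (Fin.cons
              (twistOp K m br α ((i : ℕ) + 1)
                (fun j : Fin ((i : ℕ) + 1) =>
                  x (σ ⟨(j : ℕ), by have := j.isLt; have := i.isLt; omega⟩)))
              (fun j : Fin (p - (i : ℕ)) =>
                x (σ ⟨(i : ℕ) + 1 + (j : ℕ), by have := j.isLt; omega⟩)))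
      = ∑ i : Fin (p + 1),
          ∑ W ∈ Finset.powersetCard ((i : ℕ) + 1) (Finset.univ : Finset (Fin (p + 1))),
            koszulSign K d (fsPerm W) •
              twistOp K m br α (p - (i : ℕ) + 1)
                (Fin.cons
                  (twistOp K m br α ((i : ℕ) + 1)
                    (fun j : Fin ((i : ℕ) + 1) =>
                      x (fsPerm W ⟨(j : ℕ), by have := j.isLt; have := i.isLt; omega⟩)))
                  (fun j : Fin (p - (i : ℕ)) =>
                    x (fsPerm W ⟨(i : ℕ) + 1 + (j : ℕ), by have := j.isLt; omega⟩))) := by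
    apply Finset.sum_congr rfl
    intro i _
    exact sum_shuffle_eq_sum_powersetCard (by have := i.isLt; omega : (i : ℕ) + 1 ≤ p + 1) _
  rw [hTS]
  have key : (r.factorial : K) •
      ∑ i : Fin (p + 1),
        ∑ W ∈ Finset.powersetCard ((i : ℕ) + 1) (Finset.univ : Finset (Fin (p + 1))),
          koszulSign K d (fsPerm W) •
            twistOp K m br α (p - (i : ℕ) + 1)
              (Fin.cons
                (twistOp K m br α ((i : ℕ) + 1)
                  (fun j : Fin ((i : ℕ) + 1) =>
                    x (fsPerm W ⟨(j : ℕ), by have := j.isLt; have := i.isLt; omega⟩)))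
                (fun j : Fin (p - (i : ℕ)) =>
                  x (fsPerm W ⟨(i : ℕ) + 1 + (j : ℕ), by have := j.isLt; omega⟩))) = 0 := by
    rw [Finset.smul_sum]
    calc ∑ i : Fin (p + 1), (r.factorial : K) •
          ∑ W ∈ Finset.powersetCard ((i : ℕ) + 1) (Finset.univ : Finset (Fin (p + 1))),
            koszulSign K d (fsPerm W) •
              twistOp K m br α (p - (i : ℕ) + 1)
                (Fin.cons
                  (twistOp K m br α ((i : ℕ) + 1)
                    (fun j : Fin ((i : ℕ) + 1) =>
                      x (fsPerm W ⟨(j : ℕ), by have := j.isLt; have := i.isLt; omega⟩)))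
                  (fun j : Fin (p - (i : ℕ)) =>
                    x (fsPerm W ⟨(i : ℕ) + 1 + (j : ℕ), by have := j.isLt; omega⟩)))
        = ∑ i : Fin (p + 1), ∑ SW ∈ D.filter (fun SW => SW.2.card = (i : ℕ) + 1), G SW :=
          Finset.sum_congr rfl (fun i _ => (hfib i).symm)
      _ = ∑ i : Fin (p + 1), ∑ SW ∈ (D.filter (fun SW => ¬ SW.2.card = 0)).filter
            (fun SW => (⟨SW.2.card - 1, by have := card_le_fin SW.2; omega⟩ : Fin (p + 1)) = i),
            G SW := Finset.sum_congr rfl (fun i _ => by rw [hfibeq i])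
      _ = ∑ SW ∈ D.filter (fun SW => ¬ SW.2.card = 0), G SW := hfibsplit
      _ = 0 := hJ3
  rcases smul_eq_zero.1 key with h | h
  · exact absurd h (by exact_mod_cast r.factorial_ne_zero)
  · exact h

end Main5

/-- Let `(g, {-,...,-})` be a Lie `n`-algebra (`n = m+1`, graded by submodules
`𝒜 i` of `A`, with a degree-1 graded-symmetric `n`-ary bracket `br` satisfying the Lie
`n`-algebra Jacobi identity) and let `α ∈ g⁰` be a Maurer-Cartan element (`{α,...,α} = 0`).
Then the twisted operations `l^α_k` define an `L∞`-algebra structure on `g`: each `l^α_k` has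
degree 1, is graded symmetric, and the generalized Jacobi identities hold.  Moreover `α + α'`
is a Maurer-Cartan element of `(g, {-,...,-})` if and only if `α'` is a Maurer-Cartan element
of the twisted `L∞`-algebra, i.e. `Σ_{k=1}^n (1/k!) l^α_k(α',...,α') = 0`. -/
theorem twisted_L_infinity_and_maurer_cartan {K : Type*} [Field K] [CharZero K]
    {A : Type*} [AddCommGroup A] [Module K A] (m : ℕ) (𝒜 : ℤ → Submodule K A)
    (br : (Fin (m + 1) → A) → A)
    -- multilinearity of the bracket
    (hadd : ∀ (x : Fin (m + 1) → A) (i : Fin (m + 1)) (a b : A),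
        br (Function.update x i (a + b)) =
          br (Function.update x i a) + br (Function.update x i b))
    (hsmul : ∀ (x : Fin (m + 1) → A) (i : Fin (m + 1)) (c : K) (a : A),
        br (Function.update x i (c • a)) = c • br (Function.update x i a))
    -- the bracket has degree 1
    (hdeg : ∀ (d : Fin (m + 1) → ℤ) (x : Fin (m + 1) → A),
        (∀ j, x j ∈ 𝒜 (d j)) → br x ∈ 𝒜 ((∑ j, d j) + 1))
    -- graded symmetry
    (hsym : ∀ (d : Fin (m + 1) → ℤ) (x : Fin (m + 1) → A) (σ : Equiv.Perm (Fin (m + 1))),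
        (∀ j, x j ∈ 𝒜 (d j)) → br (x ∘ σ) = koszulSign K d σ • br x)
    -- the Lie n-algebra Jacobi identity (sum over (n, n-1)-shuffles)
    (hjac : ∀ (d : Fin (m + 1 + m) → ℤ) (x : Fin (m + 1 + m) → A),
        (∀ j, x j ∈ 𝒜 (d j)) →
        ∑ σ ∈ Finset.univ.filter
            (fun σ : Equiv.Perm (Fin (m + 1 + m)) => IsShuffle (m + 1) σ),
          koszulSign K d σ •
            br (Fin.cons
              (br (fun j : Fin (m + 1) => x (σ ⟨(j : ℕ), by have := j.isLt; omega⟩)))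
              (fun j : Fin m => x (σ ⟨m + 1 + (j : ℕ), by have := j.isLt; omega⟩))) = 0)
    -- the Maurer-Cartan element
    (α : A) (hα : α ∈ 𝒜 0) (hMC : br (fun _ => α) = 0) :
    -- each twisted operation has degree 1
    (∀ (k : ℕ) (d : Fin k → ℤ) (x : Fin k → A), (∀ j, x j ∈ 𝒜 (d j)) →
        twistOp K m br α k x ∈ 𝒜 ((∑ j, d j) + 1)) ∧
    -- each twisted operation is graded symmetric
    (∀ (k : ℕ) (d : Fin k → ℤ) (x : Fin k → A) (σ : Equiv.Perm (Fin k)),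
        (∀ j, x j ∈ 𝒜 (d j)) →
        twistOp K m br α k (x ∘ σ) = koszulSign K d σ • twistOp K m br α k x) ∧
    -- the generalized Jacobi identities of an L∞-algebra
    (∀ (p : ℕ) (d : Fin (p + 1) → ℤ) (x : Fin (p + 1) → A), (∀ j, x j ∈ 𝒜 (d j)) →
        ∑ i : Fin (p + 1),
          ∑ σ ∈ Finset.univ.filter
              (fun σ : Equiv.Perm (Fin (p + 1)) => IsShuffle ((i : ℕ) + 1) σ),
            koszulSign K d σ •
              twistOp K m br α (p - (i : ℕ) + 1)
                (Fin.cons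
                  (twistOp K m br α ((i : ℕ) + 1)
                    (fun j : Fin ((i : ℕ) + 1) =>
                      x (σ ⟨(j : ℕ), by have := j.isLt; have := i.isLt; omega⟩)))
                  (fun j : Fin (p - (i : ℕ)) =>
                    x (σ ⟨(i : ℕ) + 1 + (j : ℕ), by have := j.isLt; omega⟩))) = 0) ∧
    -- Maurer-Cartan correspondence
    (∀ α' : A, α' ∈ 𝒜 0 →
        (br (fun _ => α + α') = 0 ↔
          ∑ k : Fin (m + 1), ((((k : ℕ) + 1).factorial : K))⁻¹ •
            twistOp K m br α ((k : ℕ) + 1) (fun _ => α') = 0)) := by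
  refine ⟨?_, ?_, ?_, ?_⟩
  · exact fun k d x hx => twist_deg α hα hdeg k d x hx
  · exact fun k d x σ hx => twist_sym α hα hsym k d x σ hx
  · exact fun p d x hx => gen_jacobi α hα hsmul hdeg hsym hjac hMC p d x hx
  · exact fun α' hα' => mc_correspondence α hα hadd hsmul hsym hMC α' hα'
end

section
/- For n-Lie algebra 1-cochains: a linear map T': V → g is such that T + T' is a relative Rota-Baxter operator on the n-LieRep pair (g,ρ) if and only if T' satisfies the Maurer-Cartan equation Σ_{k=1}^n (1/k!) l^T_k(T',...,T') = 0 in the twisted L∞-algebra, where l^T_k(P1,...,Pk) = (1/(n−k)!){T,...,T,P1,...,Pk} and {P1,...,Pn} = [...[[μ+ρ,P1],P2],...,Pn] in the graded Lie algebra of n-Lie cochains on g⊕V. -/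
/-- A map on `k`-tuples is multilinear (additive and homogeneous in each slot). -/
def MultiLinearOn (K : Type*) [Field K] {g h : Type*} [AddCommGroup g] [Module K g]
    [AddCommGroup h] [Module K h] {k : ℕ} (f : (Fin k → g) → h) : Prop :=
  (∀ (x : Fin k → g) (i : Fin k) (a b : g),
      f (Function.update x i (a + b)) = f (Function.update x i a) + f (Function.update x i b)) ∧
  (∀ (x : Fin k → g) (i : Fin k) (c : K) (a : g),
      f (Function.update x i (c • a)) = c • f (Function.update x i a))

/-- A map on `k`-tuples is skew-symmetric. -/
def SkewOn {g h : Type*} [AddCommGroup h] {k : ℕ} (f : (Fin k → g) → h) : Prop :=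
  ∀ (x : Fin k → g) (σ : Equiv.Perm (Fin k)), f (x ∘ σ) = (Equiv.Perm.sign σ : ℤ) • f x

/-- The Filippov (fundamental) identity for an `(m+2)`-ary bracket. -/
def Filippov {g : Type*} [AddCommGroup g] {m : ℕ} (br : (Fin (m + 2) → g) → g) : Prop :=
  ∀ (x : Fin (m + 1) → g) (y : Fin (m + 2) → g),
    br (Fin.snoc x (br y)) =
      ∑ i : Fin (m + 2), br (Function.update y i (br (Fin.snoc x (y i))))

/-- `br` is an `n`-Lie algebra bracket (`n = m+2`): multilinear, skew-symmetric, Filippov. -/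
def IsNLie (K : Type*) [Field K] {g : Type*} [AddCommGroup g] [Module K g] {m : ℕ}
    (br : (Fin (m + 2) → g) → g) : Prop :=
  MultiLinearOn K br ∧ SkewOn br ∧ Filippov br

/-- `ρ` is a representation of the `(m+2)`-Lie algebra `(g, br)` on `V`. -/
def IsRep (K : Type*) [Field K] {g V : Type*} [AddCommGroup g] [Module K g]
    [AddCommGroup V] [Module K V] {m : ℕ} (br : (Fin (m + 2) → g) → g)
    (ρ : (Fin (m + 1) → g) → Module.End K V) : Prop :=
  MultiLinearOn K ρ ∧ SkewOn ρ ∧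
  (∀ X Y : Fin (m + 1) → g,
      ρ X * ρ Y - ρ Y * ρ X =
        ∑ i : Fin (m + 1), ρ (Function.update Y i (br (Fin.snoc X (Y i))))) ∧
  (∀ (x : Fin m → g) (y : Fin (m + 2) → g),
      ρ (Fin.snoc x (br y)) =
        ∑ i : Fin (m + 2), ((-1 : ℤ) ^ ((m + 1) - (i : ℕ))) •
          (ρ (fun j => y (i.succAbove j)) * ρ (Fin.snoc x (y i))))

/-- `T : V → g` is a relative Rota-Baxter operator on the `(m+2)`-LieRep pair `(g, br; ρ)`. -/
def IsRBO (K : Type*) [Field K] {g V : Type*} [AddCommGroup g] [Module K g]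
    [AddCommGroup V] [Module K V] {m : ℕ} (br : (Fin (m + 2) → g) → g)
    (ρ : (Fin (m + 1) → g) → Module.End K V) (T : V →ₗ[K] g) : Prop :=
  ∀ v : Fin (m + 2) → V,
    br (fun i => T (v i)) =
      ∑ i : Fin (m + 2), ((-1 : ℤ) ^ ((m + 1) - (i : ℕ))) •
        T (ρ (fun j => T (v (i.succAbove j))) (v i))

/-- The induced bracket `[u₁,...,uₙ]_T` on `V` of a relative Rota-Baxter operator. -/
def rbBracket (K : Type*) [Field K] {g V : Type*} [AddCommGroup g] [Module K g]
    [AddCommGroup V] [Module K V] {m : ℕ}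
    (ρ : (Fin (m + 1) → g) → Module.End K V) (T : V →ₗ[K] g)
    (v : Fin (m + 2) → V) : V :=
  ∑ i : Fin (m + 2), ((-1 : ℤ) ^ ((m + 1) - (i : ℕ))) •
    ρ (fun j => T (v (i.succAbove j))) (v i)

/-- The induced representation map `ρ_T` of `(V, [-,...,-]_T)` on `g`. -/
def rbRho (K : Type*) [Field K] {g V : Type*} [AddCommGroup g] [Module K g]
    [AddCommGroup V] [Module K V] {m : ℕ} (br : (Fin (m + 2) → g) → g)
    (ρ : (Fin (m + 1) → g) → Module.End K V) (T : V →ₗ[K] g)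
    (u : Fin (m + 1) → V) (x : g) : g :=
  br (Fin.snoc (fun j => T (u j)) x) -
    ∑ i : Fin (m + 1), ((-1 : ℤ) ^ ((m + 1) - (i : ℕ))) •
      T (ρ (Fin.snoc (fun j : Fin m => T (u (i.succAbove j))) x) (u i))

/-- The bracket `[x₁,...,xₙ]_C` induced by an `n`-pre-Lie product (`n = m+2`). -/
def preC (K : Type*) [Field K] {g : Type*} [AddCommGroup g] [Module K g] {m : ℕ}
    (p : (Fin (m + 1) → g) → g → g) (y : Fin (m + 2) → g) : g :=
  ∑ i : Fin (m + 2), ((-1 : ℤ) ^ ((m + 1) - (i : ℕ))) •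
    p (fun j => y (i.succAbove j)) (y i)

/-- `p` is an `n`-pre-Lie algebra structure (`n = m+2`). -/
def IsNPreLie (K : Type*) [Field K] {g : Type*} [AddCommGroup g] [Module K g] {m : ℕ}
    (p : (Fin (m + 1) → g) → g → g) : Prop :=
  (∀ z : g, MultiLinearOn K (fun x => p x z)) ∧
  (∀ (x : Fin (m + 1) → g) (a b : g), p x (a + b) = p x a + p x b) ∧
  (∀ (x : Fin (m + 1) → g) (c : K) (a : g), p x (c • a) = c • p x a) ∧
  (∀ z : g, SkewOn (fun x => p x z)) ∧
  (∀ (x y : Fin (m + 1) → g) (z : g),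
      p x (p y z) =
        (∑ i : Fin (m + 1), p (Function.update y i (preC K p (Fin.snoc x (y i)))) z) +
          p y (p x z)) ∧
  (∀ (x : Fin m → g) (w : g) (y : Fin (m + 2) → g),
      p (Fin.cons (preC K p y) x) w =
        ∑ i : Fin (m + 2), ((-1 : ℤ) ^ ((m + 1) - (i : ℕ))) •
          p (fun j => y (i.succAbove j)) (p (Fin.cons (y i) x) w))

/-- The `n`-ary bracket `{P₁,...,Pₙ}` on 1-cochains `Hom(V,g)` (`n = m+2`), evaluated on
`(v₁,...,vₙ)`, i.e. the derived bracket `[...[[μ+ρ, P₁], P₂], ..., Pₙ]` of the graded Lie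
algebra of `n`-Lie cochains on `g ⊕ V`, in its explicit symmetrized form. -/
def cochainBr (K : Type*) [Field K] {g V : Type*} [AddCommGroup g] [Module K g]
    [AddCommGroup V] [Module K V] {m : ℕ} (br : (Fin (m + 2) → g) → g)
    (ρ : (Fin (m + 1) → g) → Module.End K V)
    (Q : Fin (m + 2) → (V →ₗ[K] g)) (v : Fin (m + 2) → V) : g :=
  ∑ σ : Equiv.Perm (Fin (m + 2)),
    (br (fun i => Q (σ i) (v i)) -
      ∑ k : Fin (m + 2), ((-1 : ℤ) ^ ((m + 1) - (k : ℕ))) •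
        Q (σ 0) (ρ (fun j : Fin (m + 1) => Q (σ j.succ) (v (k.succAbove j))) (v k)))

section Aux

variable {K : Type*} [Field K] {g V : Type*} [AddCommGroup g] [Module K g]
  [AddCommGroup V] [Module K V] {m : ℕ}

/-- defect of `R` as RBO -/
def rboDefect (K : Type*) [Field K] {g V : Type*} [AddCommGroup g] [Module K g]
    [AddCommGroup V] [Module K V] {m : ℕ} (br : (Fin (m + 2) → g) → g)
    (ρ : (Fin (m + 1) → g) → Module.End K V) (R : V →ₗ[K] g) (v : Fin (m + 2) → V) : g :=
  br (fun i => R (v i)) -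
    ∑ i : Fin (m + 2), ((-1 : ℤ) ^ ((m + 1) - (i : ℕ))) •
      R (ρ (fun j => R (v (i.succAbove j))) (v i))

theorem cochainBr_const (br : (Fin (m + 2) → g) → g) (ρ : (Fin (m + 1) → g) → Module.End K V)
    (R : V →ₗ[K] g) (v : Fin (m + 2) → V) :
    cochainBr K br ρ (fun _ => R) v = (m + 2).factorial • rboDefect K br ρ R v := by
  simp [cochainBr, rboDefect, Finset.sum_const, Finset.card_univ, Fintype.card_perm, Fintype.card_fin, smul_sub]

theorem cochainBr_comp_perm (br : (Fin (m + 2) → g) → g) (ρ : (Fin (m + 1) → g) → Module.End K V)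
    (Q : Fin (m + 2) → (V →ₗ[K] g)) (τ : Equiv.Perm (Fin (m + 2))) (v : Fin (m + 2) → V) :
    cochainBr K br ρ (Q ∘ τ) v = cochainBr K br ρ Q v := by
  refine Fintype.sum_equiv (Equiv.mulLeft τ) _ _ (fun σ => ?_)
  simp [Equiv.Perm.mul_apply, Function.comp]

end Aux

section Aux2
variable {K : Type*} [Field K] {g V : Type*} [AddCommGroup g] [Module K g]
  [AddCommGroup V] [Module K V] {m : ℕ}
variable (br : (Fin (m + 2) → g) → g) (ρ : (Fin (m + 1) → g) → Module.End K V)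

/-- `cochainBr` bundled as a multilinear map in the cochain slots, for fixed `v`. -/
noncomputable def cochainML (hbr : MultiLinearOn K br) (hρ : MultiLinearOn K ρ)
    (v : Fin (m + 2) → V) :
    MultilinearMap K (fun _ : Fin (m + 2) => V →ₗ[K] g) g where
  toFun Q := cochainBr K br ρ Q v
  map_update_add' := by
    intro dec Q p A B
    have hdec : dec = instDecidableEqFin (m + 2) := Subsingleton.elim _ _
    subst hdec
    simp only [cochainBr]
    rw [← Finset.sum_add_distrib]
    refine Finset.sum_congr rfl (fun σ _ => ?_)
    have key : ∀ X : V →ₗ[K] g,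
        (fun i => Function.update Q p X (σ i) (v i)) =
          Function.update (fun i => Q (σ i) (v i)) (σ.symm p) (X (v (σ.symm p))) := by
      intro X; funext i
      rcases eq_or_ne i (σ.symm p) with h | h
      · subst h; rw [Equiv.apply_symm_apply, Function.update_self, Function.update_self]
      · have h2 : σ i ≠ p := fun hc => h (by rw [← hc]; simp)
        rw [Function.update_of_ne h, Function.update_of_ne h2]
    have hbr2 : br (fun i => Function.update Q p (A + B) (σ i) (v i)) =
        br (fun i => Function.update Q p A (σ i) (v i)) +
          br (fun i => Function.update Q p B (σ i) (v i)) := by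
      rw [key A, key B, key (A + B), LinearMap.add_apply, hbr.1]
    rcases Fin.eq_zero_or_eq_succ (σ.symm p) with h0 | ⟨j₀, hj⟩
    · -- p sits in position 0
      have hσ0 : σ 0 = p := by rw [← h0]; simp
      have hsucc : ∀ (X : V →ₗ[K] g) (j : Fin (m + 1)),
          Function.update Q p X (σ j.succ) = Q (σ j.succ) := by
        intro X j
        refine Function.update_of_ne (fun hc => ?_) _ _
        have : (j.succ : Fin (m + 2)) = σ.symm p := by rw [← hc]; simp
        rw [h0] at this
        exact Fin.succ_ne_zero j this
      have hterm : ∀ k : Fin (m + 2),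
          (fun j : Fin (m + 1) => Function.update Q p (A + B) (σ j.succ) (v (k.succAbove j))) =
            (fun j : Fin (m + 1) => Q (σ j.succ) (v (k.succAbove j))) := by
        intro k; funext j; rw [hsucc]
      have htermA : ∀ k : Fin (m + 2),
          (fun j : Fin (m + 1) => Function.update Q p A (σ j.succ) (v (k.succAbove j))) =
            (fun j : Fin (m + 1) => Q (σ j.succ) (v (k.succAbove j))) := by
        intro k; funext j; rw [hsucc]
      have htermB : ∀ k : Fin (m + 2),
          (fun j : Fin (m + 1) => Function.update Q p B (σ j.succ) (v (k.succAbove j))) =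
            (fun j : Fin (m + 1) => Q (σ j.succ) (v (k.succAbove j))) := by
        intro k; funext j; rw [hsucc]
      have h0up : ∀ X : V →ₗ[K] g, Function.update Q p X (σ 0) = X := by
        intro X; rw [hσ0]; simp
      rw [hbr2]
      simp only [hterm, htermA, htermB, h0up, LinearMap.add_apply, smul_add,
        Finset.sum_add_distrib]
      abel
    · -- p sits in position j₀.succ
      have hσ0 : σ 0 ≠ p := fun hc => by
        have : (0 : Fin (m + 2)) = σ.symm p := by rw [← hc]; simp
        rw [hj] at this; exact (Fin.succ_ne_zero j₀) this.symm
      have h0up : ∀ X : V →ₗ[K] g, Function.update Q p X (σ 0) = Q (σ 0) :=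
        fun X => Function.update_of_ne hσ0 _ _
      have hin : ∀ (X : V →ₗ[K] g) (k : Fin (m + 2)),
          (fun j : Fin (m + 1) => Function.update Q p X (σ j.succ) (v (k.succAbove j))) =
            Function.update (fun j : Fin (m + 1) => Q (σ j.succ) (v (k.succAbove j))) j₀
              (X (v (k.succAbove j₀))) := by
        intro X k; funext j
        rcases eq_or_ne j j₀ with h | h
        · subst h; simp only [Function.update_self]
          have : σ j.succ = p := by rw [← hj]; simp
          rw [this]; simp
        · have h2 : σ j.succ ≠ p := fun hc => by
            have : (j.succ : Fin (m + 2)) = σ.symm p := by rw [← hc]; simp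
            rw [hj] at this
            exact h (Fin.succ_injective _ this)
          rw [Function.update_of_ne h2, Function.update_of_ne h]
      rw [hbr2]
      have hrho : ∀ k : Fin (m + 2),
          ρ (fun j : Fin (m + 1) => Function.update Q p (A + B) (σ j.succ) (v (k.succAbove j))) =
            ρ (fun j : Fin (m + 1) => Function.update Q p A (σ j.succ) (v (k.succAbove j))) +
              ρ (fun j : Fin (m + 1) => Function.update Q p B (σ j.succ) (v (k.succAbove j))) := by
        intro k
        rw [hin A, hin B, hin (A + B), LinearMap.add_apply, hρ.1]
      simp only [hrho, h0up, LinearMap.add_apply, map_add, smul_add, Finset.sum_add_distrib]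
      abel
  map_update_smul' := by
    intro dec Q p c A
    have hdec : dec = instDecidableEqFin (m + 2) := Subsingleton.elim _ _
    subst hdec
    simp only [cochainBr]
    rw [Finset.smul_sum]
    refine Finset.sum_congr rfl (fun σ _ => ?_)
    have key : ∀ X : V →ₗ[K] g,
        (fun i => Function.update Q p X (σ i) (v i)) =
          Function.update (fun i => Q (σ i) (v i)) (σ.symm p) (X (v (σ.symm p))) := by
      intro X; funext i
      rcases eq_or_ne i (σ.symm p) with h | h
      · subst h; rw [Equiv.apply_symm_apply, Function.update_self, Function.update_self]
      · have h2 : σ i ≠ p := fun hc => h (by rw [← hc]; simp)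
        rw [Function.update_of_ne h, Function.update_of_ne h2]
    have hbr2 : br (fun i => Function.update Q p (c • A) (σ i) (v i)) =
        c • br (fun i => Function.update Q p A (σ i) (v i)) := by
      rw [key A, key (c • A), LinearMap.smul_apply, hbr.2]
    rcases Fin.eq_zero_or_eq_succ (σ.symm p) with h0 | ⟨j₀, hj⟩
    · have hσ0 : σ 0 = p := by rw [← h0]; simp
      have hsucc : ∀ (X : V →ₗ[K] g) (j : Fin (m + 1)),
          Function.update Q p X (σ j.succ) = Q (σ j.succ) := by
        intro X j
        refine Function.update_of_ne (fun hc => ?_) _ _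
        have : (j.succ : Fin (m + 2)) = σ.symm p := by rw [← hc]; simp
        rw [h0] at this
        exact Fin.succ_ne_zero j this
      have hterm : ∀ (X : V →ₗ[K] g) (k : Fin (m + 2)),
          (fun j : Fin (m + 1) => Function.update Q p X (σ j.succ) (v (k.succAbove j))) =
            (fun j : Fin (m + 1) => Q (σ j.succ) (v (k.succAbove j))) := by
        intro X k; funext j; rw [hsucc]
      have h0up : ∀ X : V →ₗ[K] g, Function.update Q p X (σ 0) = X := by
        intro X; rw [hσ0]; simp
      rw [hbr2]
      simp only [hterm, h0up, LinearMap.smul_apply, smul_comm c, Finset.smul_sum, smul_sub]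
      try rw [Finset.sum_congr rfl (fun k _ => by rw [smul_comm ((-1 : ℤ) ^ ((m+1) - (k:ℕ))) c])]
    · have hσ0 : σ 0 ≠ p := fun hc => by
        have : (0 : Fin (m + 2)) = σ.symm p := by rw [← hc]; simp
        rw [hj] at this; exact (Fin.succ_ne_zero j₀) this.symm
      have h0up : ∀ X : V →ₗ[K] g, Function.update Q p X (σ 0) = Q (σ 0) :=
        fun X => Function.update_of_ne hσ0 _ _
      have hin : ∀ (X : V →ₗ[K] g) (k : Fin (m + 2)),
          (fun j : Fin (m + 1) => Function.update Q p X (σ j.succ) (v (k.succAbove j))) =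
            Function.update (fun j : Fin (m + 1) => Q (σ j.succ) (v (k.succAbove j))) j₀
              (X (v (k.succAbove j₀))) := by
        intro X k; funext j
        rcases eq_or_ne j j₀ with h | h
        · subst h; simp only [Function.update_self]
          have : σ j.succ = p := by rw [← hj]; simp
          rw [this]; simp
        · have h2 : σ j.succ ≠ p := fun hc => by
            have : (j.succ : Fin (m + 2)) = σ.symm p := by rw [← hc]; simp
            rw [hj] at this
            exact h (Fin.succ_injective _ this)
          rw [Function.update_of_ne h2, Function.update_of_ne h]
      have hrho : ∀ k : Fin (m + 2),
          ρ (fun j : Fin (m + 1) => Function.update Q p (c • A) (σ j.succ) (v (k.succAbove j))) =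
            c • ρ (fun j : Fin (m + 1) => Function.update Q p A (σ j.succ) (v (k.succAbove j))) := by
        intro k
        rw [hin A, hin (c • A), LinearMap.smul_apply, hρ.2]
      rw [hbr2]
      simp only [hrho, h0up, LinearMap.smul_apply, map_smul, smul_sub, Finset.smul_sum]
      try rw [Finset.sum_congr rfl (fun k _ => by rw [smul_comm ((-1 : ℤ) ^ ((m+1) - (k:ℕ))) c])]
end Aux2

section Aux3
variable {α : Type*} [Fintype α] [DecidableEq α]

theorem exists_perm_mem_iff_aux (s t : Finset α) (h : s.card = t.card) :
    ∃ σ : Equiv.Perm α, ∀ i, i ∈ s ↔ σ i ∈ t := by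
  classical
  have h1 : Fintype.card {x // x ∈ s} = Fintype.card {x // x ∈ t} := by
    simp [Fintype.card_coe, h]
  have h2 : Fintype.card {x // ¬ x ∈ s} = Fintype.card {x // ¬ x ∈ t} := by
    rw [Fintype.card_subtype_compl, Fintype.card_subtype_compl, h1]
  let e1 : {x // x ∈ s} ≃ {x // x ∈ t} := Fintype.equivOfCardEq h1
  let e2 : {x // ¬ x ∈ s} ≃ {x // ¬ x ∈ t} := Fintype.equivOfCardEq h2
  refine ⟨(Equiv.sumCompl (· ∈ s)).symm.trans ((e1.sumCongr e2).trans
    (Equiv.sumCompl (· ∈ t))), fun i => ?_⟩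
  by_cases hi : i ∈ s
  · simp only [Equiv.trans_apply, Equiv.sumCompl_symm_apply_of_pos hi, Equiv.sumCongr_apply,
      Sum.map_inl, Equiv.sumCompl_apply_inl]
    exact iff_of_true hi (e1 ⟨i, hi⟩).2
  · simp only [Equiv.trans_apply, Equiv.sumCompl_symm_apply_of_neg hi, Equiv.sumCongr_apply,
      Sum.map_inr, Equiv.sumCompl_apply_inr]
    exact iff_of_false hi (e2 ⟨i, hi⟩).2

theorem card_top_filter (n a : ℕ) (h : a ≤ n) :
    (Finset.univ.filter (fun i : Fin n => n - a ≤ (i : ℕ))).card = a := by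
  have : (Finset.univ.filter (fun i : Fin n => n - a ≤ (i : ℕ))).card =
      (Finset.Ico (n - a) n).card := by
    refine Finset.card_bij (fun i _ => (i : ℕ)) ?_ ?_ ?_
    · intro i hi
      simp only [Finset.mem_filter] at hi
      exact Finset.mem_Ico.mpr ⟨hi.2, i.isLt⟩
    · intro i _ j _ hij; exact Fin.val_injective hij
    · intro b hb
      rw [Finset.mem_Ico] at hb
      exact ⟨⟨b, hb.2⟩, by simp only [Finset.mem_filter, Finset.mem_univ, true_and]; exact hb.1, rfl⟩
  rw [this, Nat.card_Ico, Nat.sub_sub_self h]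

end Aux3

theorem mc_key {K : Type*} [Field K] [CharZero K] {g V : Type*}
    [AddCommGroup g] [Module K g] [AddCommGroup V] [Module K V] {m : ℕ}
    (br : (Fin (m + 2) → g) → g) (ρ : (Fin (m + 1) → g) → Module.End K V)
    (T : V →ₗ[K] g) (hbr : MultiLinearOn K br) (hrho : MultiLinearOn K ρ)
    (hT : IsRBO K br ρ T) (T' : V →ₗ[K] g) (v : Fin (m + 2) → V) :
    ∑ k : Fin (m + 2),
        ((((k : ℕ) + 1).factorial * ((m + 2) - ((k : ℕ) + 1)).factorial : ℕ) : K)⁻¹ •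
          cochainBr K br ρ
            (fun i => if (i : ℕ) < (m + 2) - ((k : ℕ) + 1) then T else T') v
      = rboDefect K br ρ (T + T') v := by
  classical
  set f := cochainML br ρ hbr hrho v with hfdef
  have hf : ∀ Q, f Q = cochainBr K br ρ Q v := fun Q => rfl
  have h0 : (fun i : Fin (m + 2) => if (i : ℕ) < (m + 2) - 0 then T else T') =
      fun _ => T := by
    funext i; simp [i.isLt]
  have hTdef : rboDefect K br ρ T v = 0 := sub_eq_zero_of_eq (hT v)
  have hexp : cochainBr K br ρ (fun _ => T + T') v
      = ∑ s : Finset (Fin (m + 2)), cochainBr K br ρ (fun i => if i ∈ s then T' else T) v := by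
    have h1 : ((fun _ => T') + (fun _ => T) : Fin (m + 2) → V →ₗ[K] g) = fun _ => T + T' := by
      funext i; exact add_comm _ _
    calc cochainBr K br ρ (fun _ => T + T') v = f ((fun _ => T') + (fun _ => T)) := by
          rw [← hf, h1]
      _ = ∑ s : Finset (Fin (m + 2)), f (s.piecewise (fun _ => T') (fun _ => T)) :=
          f.map_add_univ _ _
      _ = _ := Finset.sum_congr rfl (fun s _ => by
          have hp : s.piecewise (fun _ => T') (fun _ => T) =
              fun i => if i ∈ s then T' else T := by
            funext i; simp [Finset.piecewise]
          rw [hf, hp])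
  have hs : ∀ s : Finset (Fin (m + 2)),
      cochainBr K br ρ (fun i => if i ∈ s then T' else T) v
        = cochainBr K br ρ (fun i => if (i : ℕ) < (m + 2) - s.card then T else T') v := by
    intro s
    have hsc : s.card ≤ m + 2 := by
      have := Finset.card_le_univ s; simpa using this
    obtain ⟨σ, hσ⟩ := exists_perm_mem_iff_aux s
      (Finset.univ.filter (fun i : Fin (m + 2) => (m + 2) - s.card ≤ (i : ℕ)))
      (by rw [card_top_filter _ _ hsc])
    have heq : (fun i => if i ∈ s then T' else T)
        = (fun i : Fin (m + 2) => if (i : ℕ) < (m + 2) - s.card then T else T') ∘ σ := by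
      funext i
      by_cases hi : i ∈ s
      · have h2 : (m + 2) - s.card ≤ (σ i : ℕ) := by
          have := (hσ i).mp hi; simp only [Finset.mem_filter] at this; exact this.2
        simp [Function.comp, hi, not_lt.mpr h2]
      · have h2 : ¬ ((m + 2) - s.card ≤ (σ i : ℕ)) := fun hc =>
          hi ((hσ i).mpr (by simp only [Finset.mem_filter, Finset.mem_univ, true_and]; exact hc))
        simp [Function.comp, hi, Nat.lt_of_not_le h2]
    rw [heq, cochainBr_comp_perm]
  have hsum : cochainBr K br ρ (fun _ => T + T') v
      = ∑ j ∈ Finset.range (m + 2 + 1), (m + 2).choose j •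
          cochainBr K br ρ (fun i => if (i : ℕ) < (m + 2) - j then T else T') v := by
    have hps := Finset.sum_powerset_apply_card
      (fun j => cochainBr K br ρ (fun i : Fin (m + 2) =>
        if (i : ℕ) < (m + 2) - j then T else T') v) (x := (Finset.univ : Finset (Fin (m + 2))))
    simp only [Finset.powerset_univ, Finset.card_univ, Fintype.card_fin] at hps
    rw [hexp, Finset.sum_congr rfl (fun s _ => hs s), hps]
  have hsplit : cochainBr K br ρ (fun _ => T + T') v
      = ∑ k ∈ Finset.range (m + 2), (m + 2).choose (k + 1) •
          cochainBr K br ρ (fun i => if (i : ℕ) < (m + 2) - (k + 1) then T else T') v := by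
    rw [hsum, Finset.sum_range_succ', h0, cochainBr_const, hTdef, smul_zero, smul_zero, add_zero]
  have hb : (((m + 2).factorial : ℕ) : K) ≠ 0 :=
    Nat.cast_ne_zero.mpr (Nat.factorial_ne_zero _)
  have hterm : ∀ k ∈ Finset.range (m + 2),
      (((k + 1).factorial * ((m + 2) - (k + 1)).factorial : ℕ) : K)⁻¹ •
          cochainBr K br ρ (fun i => if (i : ℕ) < (m + 2) - (k + 1) then T else T') v
        = (((m + 2).factorial : ℕ) : K)⁻¹ • ((m + 2).choose (k + 1) •
          cochainBr K br ρ (fun i => if (i : ℕ) < (m + 2) - (k + 1) then T else T') v) := by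
    intro k hk
    rw [Finset.mem_range] at hk
    have hkle : k + 1 ≤ m + 2 := hk
    have e : (m + 2).choose (k + 1) * ((k + 1).factorial * ((m + 2) - (k + 1)).factorial)
        = (m + 2).factorial := by
      rw [← mul_assoc]; exact Nat.choose_mul_factorial_mul_factorial hkle
    have ha : (((k + 1).factorial * ((m + 2) - (k + 1)).factorial : ℕ) : K) ≠ 0 :=
      Nat.cast_ne_zero.mpr (Nat.mul_ne_zero (Nat.factorial_ne_zero _) (Nat.factorial_ne_zero _))
    have e2 : (((m + 2).choose (k + 1) : ℕ) : K) *
        (((k + 1).factorial * ((m + 2) - (k + 1)).factorial : ℕ) : K)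
          = (((m + 2).factorial : ℕ) : K) := by
      rw [← Nat.cast_mul, e]
    have hco : (((k + 1).factorial * ((m + 2) - (k + 1)).factorial : ℕ) : K)⁻¹
        = (((m + 2).factorial : ℕ) : K)⁻¹ * (((m + 2).choose (k + 1) : ℕ) : K) := by
      have hc0 : (((m + 2).choose (k + 1) : ℕ) : K) ≠ 0 := by
        intro h; rw [h, zero_mul] at e2; exact hb e2.symm
      rw [← e2, mul_inv, mul_comm ((((m + 2).choose (k + 1) : ℕ) : K))⁻¹, mul_assoc,
        inv_mul_cancel₀ hc0, mul_one]
    rw [← Nat.cast_smul_eq_nsmul K, smul_smul, hco]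
  calc ∑ k : Fin (m + 2),
        ((((k : ℕ) + 1).factorial * ((m + 2) - ((k : ℕ) + 1)).factorial : ℕ) : K)⁻¹ •
          cochainBr K br ρ
            (fun i => if (i : ℕ) < (m + 2) - ((k : ℕ) + 1) then T else T') v
      = ∑ k ∈ Finset.range (m + 2),
          (((k + 1).factorial * ((m + 2) - (k + 1)).factorial : ℕ) : K)⁻¹ •
            cochainBr K br ρ (fun i => if (i : ℕ) < (m + 2) - (k + 1) then T else T') v :=
        Fin.sum_univ_eq_sum_range (fun k =>
          (((k + 1).factorial * ((m + 2) - (k + 1)).factorial : ℕ) : K)⁻¹ •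
            cochainBr K br ρ (fun i => if (i : ℕ) < (m + 2) - (k + 1) then T else T') v) (m + 2)
    _ = ∑ k ∈ Finset.range (m + 2), (((m + 2).factorial : ℕ) : K)⁻¹ • ((m + 2).choose (k + 1) •
          cochainBr K br ρ (fun i => if (i : ℕ) < (m + 2) - (k + 1) then T else T') v) :=
        Finset.sum_congr rfl hterm
    _ = (((m + 2).factorial : ℕ) : K)⁻¹ • ∑ k ∈ Finset.range (m + 2), (m + 2).choose (k + 1) •
          cochainBr K br ρ (fun i => if (i : ℕ) < (m + 2) - (k + 1) then T else T') v :=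
        (Finset.smul_sum).symm
    _ = (((m + 2).factorial : ℕ) : K)⁻¹ • cochainBr K br ρ (fun _ => T + T') v := by
        rw [← hsplit]
    _ = rboDefect K br ρ (T + T') v := by
        rw [cochainBr_const, ← Nat.cast_smul_eq_nsmul K, smul_smul, inv_mul_cancel₀ hb, one_smul]

/-- For a relative Rota-Baxter operator `T` on an `n`-LieRep pair `(g, ρ)`
(`n = m+2`), a linear map `T' : V → g` is such that `T + T'` is again a relative Rota-Baxter
operator if and only if `T'` satisfies the Maurer-Cartan equation
`Σ_{k=1}^n (1/k!) l^T_k(T',...,T') = 0` of the twisted `L∞`-algebra, where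
`l^T_k(P₁,...,Pₖ) = (1/(n-k)!) {T,...,T,P₁,...,Pₖ}`. -/
theorem mc_equation_for_sum_of_rbo {K : Type*} [Field K] [CharZero K] {g V : Type*}
    [AddCommGroup g] [Module K g] [AddCommGroup V] [Module K V] {m : ℕ}
    (br : (Fin (m + 2) → g) → g) (ρ : (Fin (m + 1) → g) → Module.End K V)
    (T : V →ₗ[K] g) (hg : IsNLie K br) (hρ : IsRep K br ρ) (hT : IsRBO K br ρ T)
    (T' : V →ₗ[K] g) :
    IsRBO K br ρ (T + T') ↔
    (∀ v : Fin (m + 2) → V,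
        ∑ k : Fin (m + 2),
          ((((k : ℕ) + 1).factorial * ((m + 2) - ((k : ℕ) + 1)).factorial : ℕ) : K)⁻¹ •
            cochainBr K br ρ
              (fun i => if (i : ℕ) < (m + 2) - ((k : ℕ) + 1) then T else T') v = 0) := by
  constructor
  · intro h v
    rw [mc_key br ρ T hg.1 hρ.1 hT T' v, rboDefect, sub_eq_zero]
    exact h v
  · intro h v
    have hv := h v
    rw [mc_key br ρ T hg.1 hρ.1 hT T' v, rboDefect, sub_eq_zero] at hv
    exact hv
end

section
/- An infinitesimal deformation T_t = T + t·𝔗1 of a relative Rota-Baxter operator T on an n-LieRep pair (g,ρ) (i.e., T_t satisfies the relative Rota-Baxter identity modulo t²) exists if and only if 𝔗1 is a 1-cocycle: Σ_{i=1}^n [Tu1,...,𝔗1 ui,...,Tun]_g = T(Σ_{i≠j}(−1)^{n−j}ρ(Tu1,...,T̂uj,...,𝔗1 ui,...,Tun)(uj)) + 𝔗1(Σ_i (−1)^{n−i}ρ(Tu1,...,T̂ui,...,Tun)(ui)) for all u1,...,un ∈ V. -/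
section Aux

def SkewOnX {g h : Type*} [AddCommGroup h] {k : ℕ} (f : (Fin k → g) → h) : Prop :=
  ∀ (x : Fin k → g) (σ : Equiv.Perm (Fin k)), f (x ∘ σ) = (Equiv.Perm.sign σ : ℤ) • f x

lemma skew_update_aux {g h : Type*} [AddCommGroup h] {k : ℕ}
    (f : (Fin (k+1) → g) → h) (hf : SkewOnX f) (b : Fin (k+1) → g) (i : Fin (k+1)) (x : g) :
    f (Function.update b i x) = ((-1:ℤ)^(k - (i:ℕ))) • f (Fin.snoc (b ∘ i.succAbove) x) := by
  set σ : Equiv.Perm (Fin (k+1)) := (finRotate (k+1)).trans (i.cycleRange).symm with hσ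
  have hcomp : (Function.update b i x) ∘ σ = Fin.snoc (b ∘ i.succAbove) x := by
    funext t
    rw [Fin.snoc_eq_cons_rotate]
    simp only [Function.comp_apply, Equiv.trans_apply, hσ]
    generalize finRotate (k+1) t = s
    refine Fin.cases ?_ (fun j => ?_) s
    · rw [Fin.cycleRange_symm_zero]; simp
    · rw [Fin.cycleRange_symm_succ, Fin.cons_succ, Function.update_of_ne (Fin.succAbove_ne i j)]
      rfl
  have h1 := hf (Function.update b i x) σ
  rw [hcomp] at h1
  have hsign : (Equiv.Perm.sign σ : ℤ) = (-1)^(k + (i:ℕ)) := by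
    have h2 : σ = (i.cycleRange).symm * finRotate (k+1) := rfl
    rw [h2, Equiv.Perm.sign_mul, Equiv.Perm.sign_symm, Fin.sign_cycleRange, sign_finRotate]
    push_cast
    rw [← pow_add, Nat.add_comm]
  rw [hsign] at h1
  rw [h1, smul_smul, ← pow_add]
  have hik : (i:ℕ) ≤ k := Nat.lt_succ_iff.mp i.isLt
  have h3 : (k - (i:ℕ)) + (k + (i:ℕ)) = 2*k := by omega
  rw [h3, pow_mul]
  norm_num

lemma val_succAboveX {n : ℕ} (p : Fin (n+1)) (t : Fin n) :
    ((p.succAbove t : Fin (n+1)) : ℕ) = if (t:ℕ) < (p:ℕ) then (t:ℕ) else (t:ℕ)+1 := by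
  rw [Fin.succAbove]
  by_cases h : (t:ℕ) < (p:ℕ)
  · rw [if_pos, if_pos h]; · rfl
    · rwa [Fin.lt_def]
  · rw [if_neg, if_neg h]; · rfl
    · rwa [Fin.lt_def]

def posIdxX {m : ℕ} (i : Fin (m+2)) (k : Fin (m+1)) : Fin (m+1) :=
  if _ : (i:ℕ) ≤ (k:ℕ) then ⟨(i:ℕ), by omega⟩ else ⟨(i:ℕ)-1, by have := i.isLt; omega⟩

lemma posIdxX_val {m : ℕ} (i : Fin (m+2)) (k : Fin (m+1)) :
    ((posIdxX i k : Fin (m+1)) : ℕ) = if (i:ℕ) ≤ (k:ℕ) then (i:ℕ) else (i:ℕ)-1 := by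
  unfold posIdxX; split_ifs <;> rfl

lemma posIdxX_spec {m : ℕ} (i : Fin (m+2)) (k : Fin (m+1)) :
    (i.succAbove k).succAbove (posIdxX i k) = i := by
  apply Fin.ext
  rw [val_succAboveX, val_succAboveX, posIdxX_val]
  have hk := k.isLt
  split_ifs <;> omega

lemma posIdxX_comp {m : ℕ} (i : Fin (m+2)) (k : Fin (m+1)) (t : Fin m) :
    (i.succAbove k).succAbove ((posIdxX i k).succAbove t) = i.succAbove (k.succAbove t) := by
  apply Fin.ext
  rw [val_succAboveX, val_succAboveX, val_succAboveX, val_succAboveX, val_succAboveX, posIdxX_val]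
  have hk := k.isLt
  have ht := t.isLt
  split_ifs <;> omega

lemma posIdxX_sign {m : ℕ} (i : Fin (m+2)) (k : Fin (m+1)) :
    ((-1:ℤ)^((m+1) - ((i.succAbove k : Fin (m+2)):ℕ))) * ((-1:ℤ)^(m - ((posIdxX i k):ℕ)))
      = ((-1:ℤ)^((m+1) - (i:ℕ))) * ((-1:ℤ)^((m+1) - (k:ℕ))) := by
  have hk := k.isLt
  have hi := i.isLt
  have hj := val_succAboveX i k
  have hp := posIdxX_val i k
  rw [← pow_add, ← pow_add, neg_one_pow_eq_pow_mod_two,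
    neg_one_pow_eq_pow_mod_two ((m+1-(i:ℕ)) + _)]
  congr 1
  split_ifs at hj hp <;> omega

end Aux


/-- An infinitesimal deformation `T_t = T + t𝔗₁` of a relative Rota-Baxter
operator `T` on an `n`-LieRep pair `(g, ρ)` (`n = m+2`) exists (i.e. the coefficient of `t`
in the Rota-Baxter identity for `T + t𝔗₁` vanishes) if and only if `𝔗₁` is a 1-cocycle for
the cohomology of `T`. -/
theorem infinitesimal_deformation_iff_cocycle {K : Type*} [Field K] {g V : Type*}
    [AddCommGroup g] [Module K g] [AddCommGroup V] [Module K V] {m : ℕ}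
    (br : (Fin (m + 2) → g) → g) (ρ : (Fin (m + 1) → g) → Module.End K V)
    (T : V →ₗ[K] g) (hg : IsNLie K br) (hρ : IsRep K br ρ) (hT : IsRBO K br ρ T)
    (T1 : V →ₗ[K] g) :
    (∀ u : Fin (m + 2) → V,
        ∑ i : Fin (m + 2), br (fun j => if j = i then T1 (u j) else T (u j)) =
          T (∑ j : Fin (m + 2), ((-1 : ℤ) ^ ((m + 1) - (j : ℕ))) •
              ∑ i ∈ Finset.univ.erase j,
                ρ (fun k => if j.succAbove k = i then T1 (u i) else T (u (j.succAbove k)))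
                  (u j)) +
            T1 (rbBracket K ρ T u)) ↔
    (∀ u : Fin (m + 2) → V,
        ∑ i : Fin (m + 2), ((-1 : ℤ) ^ ((m + 1) - (i : ℕ))) •
            rbRho K br ρ T (fun j => u (i.succAbove j)) (T1 (u i)) =
          T1 (rbBracket K ρ T u)) := by
  obtain ⟨-, hbrskew, -⟩ := hg
  obtain ⟨-, hρskew, -, -⟩ := hρ
  have key : ∀ u : Fin (m + 2) → V,
      ∑ i : Fin (m + 2), br (fun j => if j = i then T1 (u j) else T (u j)) =
        T (∑ j : Fin (m + 2), ((-1 : ℤ) ^ ((m + 1) - (j : ℕ))) •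
            ∑ i ∈ Finset.univ.erase j,
              ρ (fun k => if j.succAbove k = i then T1 (u i) else T (u (j.succAbove k)))
                (u j)) +
          ∑ i : Fin (m + 2), ((-1 : ℤ) ^ ((m + 1) - (i : ℕ))) •
            rbRho K br ρ T (fun j => u (i.succAbove j)) (T1 (u i)) := by
    intro u
    -- Step A: rewrite the bracket terms via skew-symmetry
    have stepA : ∀ i : Fin (m+2),
        br (fun j => if j = i then T1 (u j) else T (u j)) =
        ((-1:ℤ)^((m+1) - (i:ℕ))) •
          br (Fin.snoc (fun j : Fin (m+1) => T (u (i.succAbove j))) (T1 (u i))) := by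
      intro i
      have h1 : (fun j => if j = i then T1 (u j) else T (u j)) =
          Function.update (fun j => T (u j)) i (T1 (u i)) := by
        funext j
        rw [Function.update_apply]
        by_cases h : j = i
        · subst h; simp
        · simp [h]
      rw [h1, skew_update_aux br hbrskew]
      rfl
    -- Step B: the double-sum identity
    have sumEq :
        (∑ j : Fin (m+2), ∑ i ∈ Finset.univ.erase j, ((-1:ℤ)^((m+1)-(j:ℕ))) •
            T (ρ (fun k => if j.succAbove k = i then T1 (u i) else T (u (j.succAbove k)))
              (u j))) =
        ∑ i : Fin (m+2), ∑ k : Fin (m+1),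
          (((-1:ℤ)^((m+1)-(i:ℕ))) * ((-1:ℤ)^((m+1)-(k:ℕ)))) •
            T (ρ (Fin.snoc (fun j : Fin m => T (u (i.succAbove (k.succAbove j)))) (T1 (u i)))
                (u (i.succAbove k))) := by
      rw [Finset.sum_sigma', Finset.sum_sigma']
      refine (Finset.sum_bij (fun (a : Σ _ : Fin (m+2), Fin (m+1)) _ =>
        (⟨a.1.succAbove a.2, a.1⟩ : Σ _ : Fin (m+2), Fin (m+2))) ?_ ?_ ?_ ?_).symm
      · rintro ⟨i, k⟩ -
        simp only [Finset.mem_sigma, Finset.mem_univ, Finset.mem_erase, true_and, and_true]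
        exact Fin.ne_succAbove i k
      · intro a ha b hb h
        obtain ⟨i1, k1⟩ := a
        obtain ⟨i2, k2⟩ := b
        obtain ⟨h1, h2⟩ := Sigma.ext_iff.mp h
        dsimp only at h1 h2
        rw [eq_of_heq h2] at h1 ⊢
        clear h2 h
        exact congrArg (Sigma.mk i2) (Fin.succAbove_right_injective h1)
      · rintro ⟨j, i⟩ hj
        simp only [Finset.mem_sigma, Finset.mem_univ, Finset.mem_erase, true_and] at hj
        obtain ⟨k, hk⟩ := Fin.exists_succAbove_eq (show j ≠ i from fun h => hj.1 h.symm)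
        exact ⟨⟨i, k⟩, Finset.mem_sigma.mpr ⟨Finset.mem_univ _, Finset.mem_univ _⟩,
          by simp [hk]⟩
      · rintro ⟨i, k⟩ -
        dsimp only
        have hif : (fun k2 => if (i.succAbove k).succAbove k2 = i then T1 (u i)
              else T (u ((i.succAbove k).succAbove k2))) =
            Function.update (fun t => T (u ((i.succAbove k).succAbove t))) (posIdxX i k)
              (T1 (u i)) := by
          funext k2
          rw [Function.update_apply]
          have hiff : (i.succAbove k).succAbove k2 = i ↔ k2 = posIdxX i k :=
            ⟨fun h => Fin.succAbove_right_injective (h.trans (posIdxX_spec i k).symm),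
             fun h => h ▸ posIdxX_spec i k⟩
          rw [if_congr hiff rfl rfl]
        rw [hif, skew_update_aux ρ hρskew]
        have hcmp : ((fun t => T (u ((i.succAbove k).succAbove t))) ∘
            (posIdxX i k).succAbove) =
            (fun t : Fin m => T (u (i.succAbove (k.succAbove t)))) := by
          funext t
          simp only [Function.comp_apply]
          rw [posIdxX_comp]
        rw [hcmp, LinearMap.smul_apply, map_zsmul, smul_smul, posIdxX_sign]
    -- Assemble
    calc ∑ i : Fin (m + 2), br (fun j => if j = i then T1 (u j) else T (u j))
        = ∑ i : Fin (m+2), ((-1:ℤ)^((m+1) - (i:ℕ))) •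
            br (Fin.snoc (fun j : Fin (m+1) => T (u (i.succAbove j))) (T1 (u i))) :=
          Finset.sum_congr rfl (fun i _ => stepA i)
      _ = _ := by
          simp only [rbRho, smul_sub, Finset.sum_sub_distrib]
          rw [map_sum]
          simp only [map_zsmul, map_sum, Finset.smul_sum, smul_smul]
          rw [sumEq]
          abel
  constructor
  · intro h u
    exact add_left_cancel ((key u).symm.trans (h u))
  · intro h u
    rw [key u, h u]
end
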